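/- arXiv:1809.02358 — 7 statements merged into one kernel-verified Lean document; each statement's English description precedes it below -/
import Mathlib

section
/- Let G be a connected finite simple graph with double vertex-weights a, b : V(G) → ℝ⁺, and let {F₁, ..., F_r} be a partition of E(G) such that for every pair u,v of vertices, d_G(u,v) = Σᵢ d_{G/Fᵢ}(ℓᵢ(u), ℓᵢ(v)), where ℓᵢ(u) denotes the connected component of G∖Fᵢ containing u and G/Fᵢ is the quotient graph. Then W(G,a,b) = Σᵢ W(G/Fᵢ, aᵢ, bᵢ), where aᵢ(C) = Σ_{x∈C} a(x) and bᵢ(C) = Σ_{x∈C} b(x) for each component C of G∖Fᵢ. -/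
/-!
Substituting the distance decomposition into `W(G,a,b)` and exchanging the sums over vertex pairs
and over `i` writes `W(G,a,b)` as `∑ᵢ ½ ∑_{u,v} (a(u)b(v) + a(v)b(u)) d_{G/Fᵢ}(ℓᵢ(u),ℓᵢ(v))`.
Grouping `u` and `v` by their components `ℓᵢ(u)`, `ℓᵢ(v)` collapses the weights to the fibre sums
`aᵢ`, `bᵢ`, which turns the `i`-th summand into `W(G/Fᵢ,aᵢ,bᵢ)`.
-/

open Finset
open scoped Classical

noncomputable section

variable {V : Type*}

noncomputable instance fintypeCC [Fintype V] (G : SimpleGraph V) : Fintype G.ConnectedComponent :=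
  @Fintype.ofFinite _ (Finite.of_surjective G.connectedComponentMk fun C => C.exists_rep)

/-- The Wiener index of a double vertex-weighted graph,
`W(G,a,b) = ∑_{{u,v}⊆V(G)} (a(u)b(v) + a(v)b(u)) d(u,v)`. -/
noncomputable def SimpleGraph.wienerDW [Fintype V] (G : SimpleGraph V) (a b : V → ℝ) : ℝ :=
  (1 / 2) * ∑ u : V, ∑ v : V, (a u * b v + a v * b u) * (G.dist u v : ℝ)

/-- The quotient graph `G/F`: vertices are the connected components of `G ∖ F`, two components
being adjacent if some vertex of one is adjacent in `G` to some vertex of the other. -/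
def SimpleGraph.quotientGraph (G : SimpleGraph V) (F : Set (Sym2 V)) :
    SimpleGraph (G.deleteEdges F).ConnectedComponent where
  Adj C D := C ≠ D ∧ ∃ u v : V, G.Adj u v ∧
    (G.deleteEdges F).connectedComponentMk u = C ∧ (G.deleteEdges F).connectedComponentMk v = D
  symm := ⟨by
    rintro C D ⟨hne, u, v, h, hu, hv⟩
    exact ⟨hne.symm, v, u, h.symm, hv, hu⟩⟩
  loopless := ⟨by rintro C ⟨hne, -⟩; exact hne rfl⟩

def fiberSum {α β M : Type*} [Fintype α] [DecidableEq β] [AddCommMonoid M] (ℓ : α → β) (a : α → M)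
    (C : β) : M :=
  ∑ x, if ℓ x = C then a x else 0

lemma sum_fiberSum_mul {α β R : Type*} [Fintype α] [Fintype β] [DecidableEq β]
    [NonUnitalNonAssocSemiring R] (ℓ : α → β) (a : α → R) (g : β → R) :
    ∑ C, fiberSum ℓ a C * g C = ∑ u, a u * g (ℓ u) := by
  simp only [fiberSum, sum_mul, ite_mul, zero_mul]
  rw [sum_comm]
  simp

lemma sum_sum_fiberSum_mul {α β R : Type*} [Fintype α] [Fintype β] [DecidableEq β] [CommSemiring R]
    (ℓ : α → β) (a b : α → R) (φ : β → β → R) :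
    ∑ C, ∑ D, fiberSum ℓ a C * fiberSum ℓ b D * φ C D = ∑ u, ∑ v, a u * b v * φ (ℓ u) (ℓ v) := by
  simp_rw [mul_assoc, ← mul_sum, sum_fiberSum_mul]

lemma SimpleGraph.wienerDW_fiberSum {α β : Type*} [Fintype α] [Fintype β] [DecidableEq β]
    (H : SimpleGraph β) (ℓ : α → β) (a b : α → ℝ) :
    H.wienerDW (fiberSum ℓ a) (fiberSum ℓ b) =
      1 / 2 * ∑ u, ∑ v, (a u * b v + a v * b u) * (H.dist (ℓ u) (ℓ v) : ℝ) := by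
  simp_rw [wienerDW, add_mul, sum_add_distrib, sum_sum_fiberSum_mul]
  congr 2
  rw [sum_comm, sum_sum_fiberSum_mul ℓ a b fun D C => (H.dist C D : ℝ), sum_comm]

theorem wienerDW_eq_sum_quotients_general [Fintype V] (G : SimpleGraph V) (a b : V → ℝ)
    (r : ℕ) (F : Fin r → Set (Sym2 V))
    (hdist : ∀ u v : V, G.dist u v =
      ∑ i, (G.quotientGraph (F i)).dist
        ((G.deleteEdges (F i)).connectedComponentMk u)
        ((G.deleteEdges (F i)).connectedComponentMk v)) :
    G.wienerDW a b = ∑ i, (G.quotientGraph (F i)).wienerDW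
      (fun C => ∑ x : V, if (G.deleteEdges (F i)).connectedComponentMk x = C then a x else 0)
      (fun C => ∑ x : V, if (G.deleteEdges (F i)).connectedComponentMk x = C then b x else 0) := by
  calc G.wienerDW a b
      = ∑ i, 1 / 2 * ∑ u, ∑ v, (a u * b v + a v * b u) *
          ((G.quotientGraph (F i)).dist ((G.deleteEdges (F i)).connectedComponentMk u)
            ((G.deleteEdges (F i)).connectedComponentMk v) : ℝ) := by
        simp_rw [SimpleGraph.wienerDW, hdist, Nat.cast_sum, mul_sum]
        exact (sum_congr rfl fun u _ => sum_comm).trans sum_comm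
    _ = _ := sum_congr rfl fun i _ => ((G.quotientGraph (F i)).wienerDW_fiberSum _ a b).symm

/-- If `(G,a,b)` is a connected double vertex-weighted graph and
`{F₁,…,F_r}` is a partition of `E(G)` satisfying the distance decomposition
`d_G(u,v) = ∑ᵢ d_{G/Fᵢ}(ℓᵢ(u),ℓᵢ(v))`, then `W(G,a,b) = ∑ᵢ W(G/Fᵢ, aᵢ, bᵢ)`, where
`aᵢ(C) = ∑_{x∈C} a(x)` and `bᵢ(C) = ∑_{x∈C} b(x)` for each component `C` of `G ∖ Fᵢ`. -/
theorem wienerDW_eq_sum_quotients [Fintype V] (G : SimpleGraph V) (hG : G.Connected)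
    (a b : V → ℝ) (ha : ∀ v, 0 < a v) (hb : ∀ v, 0 < b v)
    (r : ℕ) (F : Fin r → Set (Sym2 V))
    (hsub : ∀ i, F i ⊆ G.edgeSet)
    (hdisj : ∀ i j, i ≠ j → Disjoint (F i) (F j))
    (hcover : ∀ e ∈ G.edgeSet, ∃ i, e ∈ F i)
    (hdist : ∀ u v : V, G.dist u v =
      ∑ i, (G.quotientGraph (F i)).dist
        ((G.deleteEdges (F i)).connectedComponentMk u)
        ((G.deleteEdges (F i)).connectedComponentMk v)) :
    G.wienerDW a b = ∑ i, (G.quotientGraph (F i)).wienerDW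
      (fun C => ∑ x : V, if (G.deleteEdges (F i)).connectedComponentMk x = C then a x else 0)
      (fun C => ∑ x : V, if (G.deleteEdges (F i)).connectedComponentMk x = C then b x else 0) :=
  wienerDW_eq_sum_quotients_general G a b r F hdist

end
end

section
/- Let G be a connected finite simple graph, c ∈ V(G), and C = [c]_R = {c₁,...,c_k} the equivalence class of c under the relation R defined by x R y iff N(x) = N(y) (open neighborhoods). Let G' = G ∖ (C ∖ {c}) and for weights a, b : V(G) → ℝ⁺ define a'(c) = Σ_{x∈C} a(x), b'(c) = Σ_{x∈C} b(x), and a'(x) = a(x), b'(x) = b(x) for x ∉ C. Then W(G,a,b) = W(G',a',b') + Σ_{{cᵢ,cⱼ}⊆C} 2(a(cᵢ)b(cⱼ) + a(cⱼ)b(cᵢ)). -/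
open Finset
open scoped Classical

noncomputable section

variable {V : Type*}

lemma hom_dist_le' {V W : Type*} {G : SimpleGraph V} {G' : SimpleGraph W} (f : G →g G')
    {u v : V} (h : G.Reachable u v) : G'.dist (f u) (f v) ≤ G.dist u v := by
  obtain ⟨p, hp⟩ := h.exists_walk_length_eq_dist
  calc G'.dist (f u) (f v) ≤ (p.map f).length := SimpleGraph.dist_le _
    _ = p.length := SimpleGraph.Walk.length_map _ _
    _ = G.dist u v := hp

/-- Let `G` be a connected graph, `c` a vertex and
`C = [c]_R = {x | N(x) = N(c)}` the class of `c` under the relation "equal open neighbourhoods".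
Let `G' = G ∖ (C ∖ {c})` (the induced subgraph on `(V ∖ C) ∪ {c}`) with weights
`a'(c) = ∑_{x∈C} a(x)`, `b'(c) = ∑_{x∈C} b(x)` and `a' = a`, `b' = b` elsewhere. Then
`W(G,a,b) = W(G',a',b') + ∑_{{cᵢ,cⱼ}⊆C} 2(a(cᵢ)b(cⱼ) + a(cⱼ)b(cᵢ))`. -/
theorem wienerDW_reduction_open [Fintype V] (G : SimpleGraph V) (hG : G.Connected)
    (a b : V → ℝ) (ha : ∀ v, 0 < a v) (hb : ∀ v, 0 < b v) (c : V)
    (C : Set V) (hC : C = {x : V | G.neighborSet x = G.neighborSet c})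
    (s : Set V) (hs : s = {x : V | x ∉ C} ∪ {c})
    (hcs : c ∈ s)
    (a' b' : s → ℝ)
    (ha' : ∀ x : s, a' x = if (x : V) = c then ∑ y ∈ C.toFinset, a y else a (x : V))
    (hb' : ∀ x : s, b' x = if (x : V) = c then ∑ y ∈ C.toFinset, b y else b (x : V)) :
    G.wienerDW a b = (G.induce s).wienerDW a' b' +
      (1 / 2) * ∑ x ∈ C.toFinset, ∑ y ∈ C.toFinset \ {x},
        2 * (a x * b y + a y * b x) := by
  have hcC : c ∈ C := by rw [hC]; simp
  have hN : ∀ x ∈ C, ∀ w, G.Adj x w ↔ G.Adj c w := by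
    intro x hx w
    rw [hC] at hx
    have := Set.ext_iff.mp hx w
    simpa [SimpleGraph.mem_neighborSet] using this
  have hnotadj : ∀ x ∈ C, ∀ y ∈ C, ¬ G.Adj x y := by
    intro x hx y hy h
    have h1 : G.Adj c y := (hN x hx y).mp h
    have h2 : G.Adj y c := h1.symm
    have h3 : G.Adj c c := (hN y hy c).mp h2
    exact G.irrefl h3
  -- distance between two distinct class members is 2
  have hdist2 : ∀ x ∈ C, ∀ y ∈ C, x ≠ y → G.dist x y = 2 := by
    intro x hx y hy hxy
    obtain ⟨p⟩ := hG x y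
    cases p with
    | nil => exact absurd rfl hxy
    | cons hxw q =>
      rename_i w
      have hcw : G.Adj c w := (hN x hx w).mp hxw
      have hyw : G.Adj y w := (hN y hy w).mpr hcw
      have hle : G.dist x y ≤ 2 := by
        have := SimpleGraph.dist_le (SimpleGraph.Walk.cons hxw (SimpleGraph.Walk.cons hyw.symm SimpleGraph.Walk.nil))
        simpa using this
      have h0 : G.dist x y ≠ 0 := by
        rw [ne_eq, hG.dist_eq_zero_iff]; exact hxy
      have h1 : G.dist x y ≠ 1 := by
        rw [ne_eq, SimpleGraph.dist_eq_one_iff_adj]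
        exact hnotadj x hx y hy
      omega
  -- distance from class member to outside vertex
  have hdistC : ∀ x ∈ C, ∀ z, z ∉ C → G.dist x z = G.dist c z := by
    intro x hx z hz
    by_cases hxc : x = c
    · rw [hxc]
    set g : V → V := fun w => if w = x then c else if w = c then x else w with hg
    have step : ∀ u w, G.Adj u w → G.Adj (g u) w := by
      intro u w h
      simp only [hg]
      split_ifs with h1 h2
      · exact (hN x hx w).mp (h1 ▸ h)
      · exact (hN x hx w).mpr (h2 ▸ h)
      · exact h
    have hadj : ∀ u v, G.Adj u v → G.Adj (g u) (g v) := fun u v h =>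
      ((step _ _ ((step _ _ h).symm)).symm)
    set f : G →g G := ⟨g, fun h => hadj _ _ h⟩ with hf
    have hgx : g x = c := by simp [hg]
    have hgc : g c = x := by simp [hg, hxc, Ne.symm hxc]
    have hgz : g z = z := by
      have hzx : z ≠ x := fun h => hz (h ▸ hx)
      have hzc : z ≠ c := fun h => hz (h ▸ hcC)
      simp [hg, hzx, hzc]
    have h1 := hom_dist_le' f (hG x z)
    have h2 := hom_dist_le' f (hG c z)
    simp only [hf] at h1 h2
    change G.dist (g x) (g z) ≤ _ at h1
    change G.dist (g c) (g z) ≤ _ at h2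
    rw [hgx, hgz] at h1
    rw [hgc, hgz] at h2
    omega
  -- the projection homomorphism onto the induced graph
  have hsmem : ∀ w, w ∈ s ↔ (w ∉ C ∨ w = c) := by
    intro w
    rw [hs, Set.mem_union, Set.mem_singleton_iff, Set.mem_setOf_eq]
  have hπadj : ∀ u v, G.Adj u v →
      (G.induce s).Adj (if h : u ∈ s then (⟨u, h⟩ : s) else ⟨c, hcs⟩)
        (if h : v ∈ s then (⟨v, h⟩ : s) else ⟨c, hcs⟩) := by
    intro u v huv
    have induce_adj : ∀ (p q : s), G.Adj ↑p ↑q → (G.induce s).Adj p q := by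
      intro p q h; exact h
    split_ifs with h1 h2 h2
    · exact induce_adj _ _ huv
    · -- v ∉ s: v ∈ C, v ≠ c
      have hvC : v ∈ C := by by_contra h; exact h2 ((hsmem v).mpr (Or.inl h))
      exact induce_adj _ _ (((hN v hvC u).mp huv.symm).symm)
    · have huC : u ∈ C := by by_contra h; exact h1 ((hsmem u).mpr (Or.inl h))
      exact induce_adj _ _ ((hN u huC v).mp huv)
    · have huC : u ∈ C := by by_contra h; exact h1 ((hsmem u).mpr (Or.inl h))
      have hvC : v ∈ C := by by_contra h; exact h2 ((hsmem v).mpr (Or.inl h))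
      exact absurd huv (hnotadj u huC v hvC)
  set π : V → s := fun w => if h : w ∈ s then (⟨w, h⟩ : s) else ⟨c, hcs⟩ with hπ
  set fπ : G →g (G.induce s) := ⟨π, fun h => hπadj _ _ h⟩ with hfπ
  have hπval : ∀ (u : s), π ↑u = u := by
    intro u; simp [hπ, u.2]
  -- distances in the induced graph agree with those in G
  have hsdist : ∀ (u v : s), (G.induce s).dist u v = G.dist ↑u ↑v := by
    intro u v
    have hreach : (G.induce s).Reachable u v := by
      obtain ⟨p⟩ := hG ↑u ↑v
      have := (p.map fπ).reachable
      simp only [hfπ] at this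
      change (G.induce s).Reachable (π ↑u) (π ↑v) at this
      rwa [hπval, hπval] at this
    have h1 : (G.induce s).dist (π ↑u) (π ↑v) ≤ G.dist ↑u ↑v := hom_dist_le' fπ (hG ↑u ↑v)
    rw [hπval, hπval] at h1
    have h2 := hom_dist_le' (SimpleGraph.Embedding.induce s).toHom hreach
    simp only [SimpleGraph.Embedding.induce] at h2
    have h2' : G.dist ↑u ↑v ≤ (G.induce s).dist u v := h2
    omega
  -- ===== algebra part =====
  set F := C.toFinset with hF
  have hmemF : ∀ x : V, x ∈ F ↔ x ∈ C := fun x => Set.mem_toFinset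
  have hcF : c ∈ F := (hmemF c).mpr hcC
  have hmemFc : ∀ x : V, x ∈ Fᶜ ↔ x ∉ C := by
    intro x; rw [Finset.mem_compl, hmemF]
  have hcFc : c ∉ Fᶜ := by rw [hmemFc]; simp [hcC]
  have hsF : s.toFinset = insert c Fᶜ := by
    ext x
    rw [Set.mem_toFinset, hsmem x, Finset.mem_insert, hmemFc]
    tauto
  set Sa := ∑ y ∈ F, a y with hSa
  set Sb := ∑ y ∈ F, b y with hSb
  set d : V → V → ℝ := fun u v => (G.dist u v : ℝ) with hd
  set A : V → ℝ := fun x => if x = c then Sa else a x with hA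
  set B : V → ℝ := fun x => if x = c then Sb else b x with hB
  have hdcc : ∀ u, d u u = 0 := by intro u; simp [hd]
  have hdsym : ∀ u v, d u v = d v u := by
    intro u v; simp [hd, SimpleGraph.dist_comm]
  have hd2 : ∀ x ∈ F, ∀ y ∈ F, x ≠ y → d x y = 2 := by
    intro x hx y hy hxy
    simp [hd, hdist2 x ((hmemF x).mp hx) y ((hmemF y).mp hy) hxy]
  have hdC : ∀ x ∈ F, ∀ z ∈ Fᶜ, d x z = d c z := by
    intro x hx z hz
    simp [hd, hdistC x ((hmemF x).mp hx) z ((hmemFc z).mp hz)]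
  have hAc : A c = Sa := by simp [hA]
  have hBc : B c = Sb := by simp [hB]
  have hAx : ∀ x ∈ Fᶜ, A x = a x := by
    intro x hx
    have : x ≠ c := fun h => (Finset.mem_compl.mp hx) (h ▸ hcF)
    simp [hA, this]
  have hBx : ∀ x ∈ Fᶜ, B x = b x := by
    intro x hx
    have : x ≠ c := fun h => (Finset.mem_compl.mp hx) (h ▸ hcF)
    simp [hB, this]
  -- rewrite the induced Wiener sum over `V`
  have hsum' : ∑ u : s, ∑ v : s, (a' u * b' v + a' v * b' u) * ((G.induce s).dist u v : ℝ)
      = ∑ u ∈ s.toFinset, ∑ v ∈ s.toFinset, (A u * B v + A v * B u) * d u v := by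
    have step1 : ∑ u : s, ∑ v : s, (a' u * b' v + a' v * b' u) * ((G.induce s).dist u v : ℝ)
        = ∑ u : s, ∑ v : s, (A ↑u * B ↑v + A ↑v * B ↑u) * d ↑u ↑v := by
      apply Finset.sum_congr rfl; intro u _
      apply Finset.sum_congr rfl; intro v _
      rw [ha' u, ha' v, hb' u, hb' v, hsdist u v]
    rw [step1]
    rw [Finset.sum_set_coe (f := fun u => ∑ v : s, (A u * B ↑v + A ↑v * B u) * d u ↑v) s]
    apply Finset.sum_congr rfl; intro u _
    exact Finset.sum_set_coe (f := fun v => (A u * B v + A v * B u) * d u v) s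
  -- split the big sum
  have split : ∀ g : V → ℝ, ∑ v : V, g v = (∑ v ∈ F, g v) + ∑ v ∈ Fᶜ, g v :=
    fun g => (Finset.sum_add_sum_compl F g).symm
  have T1 : ∑ u ∈ F, ∑ v ∈ F, (a u * b v + a v * b u) * d u v
      = ∑ x ∈ F, ∑ y ∈ F \ {x}, 2 * (a x * b y + a y * b x) := by
    apply Finset.sum_congr rfl; intro u hu
    rw [Finset.sum_eq_sum_sdiff_singleton_add hu (fun v => (a u * b v + a v * b u) * d u v)]
    rw [hdcc u, mul_zero, add_zero]
    apply Finset.sum_congr rfl; intro v hv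
    obtain ⟨hvF, hvu⟩ := Finset.mem_sdiff.mp hv
    rw [hd2 u hu v hvF (fun h => (Finset.mem_singleton.mp (h ▸ Finset.mem_singleton_self v) |> fun hh => hvu (Finset.mem_singleton.mpr hh.symm)))]
    ring
  have T2 : ∑ u ∈ F, ∑ v ∈ Fᶜ, (a u * b v + a v * b u) * d u v
      = ∑ v ∈ Fᶜ, (Sa * b v + a v * Sb) * d c v := by
    rw [Finset.sum_comm]
    apply Finset.sum_congr rfl; intro v hv
    have e : ∀ u ∈ F, (a u * b v + a v * b u) * d u v = (a u * b v + a v * b u) * d c v := by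
      intro u hu; rw [hdC u hu v hv]
    rw [Finset.sum_congr rfl e, ← Finset.sum_mul]
    congr 1
    rw [Finset.sum_add_distrib, ← Finset.sum_mul, ← Finset.mul_sum, hSa, hSb]
  have T3 : ∑ u ∈ Fᶜ, ∑ v ∈ F, (a u * b v + a v * b u) * d u v
      = ∑ u ∈ Fᶜ, (a u * Sb + Sa * b u) * d u c := by
    apply Finset.sum_congr rfl; intro u hu
    have e : ∀ v ∈ F, (a u * b v + a v * b u) * d u v = (a u * b v + a v * b u) * d u c := by
      intro v hvF
      rw [hdsym u v, hdC v hvF u hu, hdsym c u]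
    rw [Finset.sum_congr rfl e, ← Finset.sum_mul]
    congr 1
    rw [Finset.sum_add_distrib, ← Finset.mul_sum, ← Finset.sum_mul, hSa, hSb]
  -- expand the induced sum
  have R : ∑ u ∈ s.toFinset, ∑ v ∈ s.toFinset, (A u * B v + A v * B u) * d u v
      = (∑ v ∈ Fᶜ, (Sa * b v + a v * Sb) * d c v)
        + ((∑ u ∈ Fᶜ, (a u * Sb + Sa * b u) * d u c)
        + ∑ u ∈ Fᶜ, ∑ v ∈ Fᶜ, (a u * b v + a v * b u) * d u v) := by
    rw [hsF, Finset.sum_insert hcFc]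
    congr 1
    · rw [Finset.sum_insert hcFc, hdcc c, mul_zero, zero_add]
      apply Finset.sum_congr rfl; intro v hv
      rw [hAc, hBc, hAx v hv, hBx v hv]
    · rw [← Finset.sum_add_distrib]
      apply Finset.sum_congr rfl; intro u hu
      rw [Finset.sum_insert hcFc, hAc, hBc, hAx u hu, hBx u hu]
      congr 1
      apply Finset.sum_congr rfl; intro v hv
      rw [hAx v hv, hBx v hv]
  -- put everything together
  rw [SimpleGraph.wienerDW, SimpleGraph.wienerDW, hsum', R]
  rw [split (fun u => ∑ v : V, (a u * b v + a v * b u) * d u v)]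
  have inner1 : ∑ u ∈ F, ∑ v : V, (a u * b v + a v * b u) * d u v
      = (∑ u ∈ F, ∑ v ∈ F, (a u * b v + a v * b u) * d u v)
        + ∑ u ∈ F, ∑ v ∈ Fᶜ, (a u * b v + a v * b u) * d u v := by
    rw [← Finset.sum_add_distrib]
    apply Finset.sum_congr rfl; intro u _
    exact split _
  have inner2 : ∑ u ∈ Fᶜ, ∑ v : V, (a u * b v + a v * b u) * d u v
      = (∑ u ∈ Fᶜ, ∑ v ∈ F, (a u * b v + a v * b u) * d u v)
        + ∑ u ∈ Fᶜ, ∑ v ∈ Fᶜ, (a u * b v + a v * b u) * d u v := by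
    rw [← Finset.sum_add_distrib]
    apply Finset.sum_congr rfl; intro u _
    exact split _
  rw [inner1, inner2, T1, T2, T3]
  ring

end
end

section
/- Let G be a connected finite simple graph, c ∈ V(G), and C = [c]_S = {c₁,...,c_k} the equivalence class of c under the relation S defined by x S y iff N[x] = N[y] (closed neighborhoods). Let G' = G ∖ (C ∖ {c}) and define weights a', b' on G' by a'(c) = Σ_{x∈C} a(x), b'(c) = Σ_{x∈C} b(x), a'(x) = a(x), b'(x) = b(x) for x ∉ C. Then W(G,a,b) = W(G',a',b') + Σ_{{cᵢ,cⱼ}⊆C} (a(cᵢ)b(cⱼ) + a(cⱼ)b(cᵢ)). -/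
open Finset
open scoped Classical

noncomputable section

variable {V : Type*}



/-- If `x` and `c` have the same closed neighbourhood, distances to other vertices agree. -/
lemma dist_le_of_closed {G : SimpleGraph V} (hG : G.Connected) {x c : V}
    (h : insert x (G.neighborSet x) = insert c (G.neighborSet c))
    {z : V} (hzx : z ≠ x) : G.dist c z ≤ G.dist x z := by
  obtain ⟨p, hp⟩ := (hG x z).exists_walk_length_eq_dist
  cases p with
  | nil => exact absurd rfl hzx.symm
  | @cons _ w _ hadj q =>
    have hw : w ∈ insert c (G.neighborSet c) := by
      rw [← h]; exact Set.mem_insert_of_mem _ hadj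
    simp only [SimpleGraph.Walk.length_cons] at hp
    rcases hw with hw | hw
    · subst hw
      calc G.dist w z ≤ q.length := SimpleGraph.dist_le q
        _ ≤ q.length + 1 := Nat.le_succ _
        _ = G.dist x z := hp
    · have : G.Adj c w := hw
      calc G.dist c z ≤ (SimpleGraph.Walk.cons this q).length := SimpleGraph.dist_le _
        _ = G.dist x z := by simp [SimpleGraph.Walk.length_cons, hp]

lemma dist_eq_of_closed {G : SimpleGraph V} (hG : G.Connected) {x c : V}
    (h : insert x (G.neighborSet x) = insert c (G.neighborSet c))
    {z : V} (hzx : z ≠ x) (hzc : z ≠ c) : G.dist x z = G.dist c z :=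
  le_antisymm (dist_le_of_closed hG h.symm hzc) (dist_le_of_closed hG h hzx)

lemma induce_walk_le {G : SimpleGraph V} (hG : G.Connected) {c : V} {C s : Set V}
    (hC : C = {x : V | insert x (G.neighborSet x) = insert c (G.neighborSet c)})
    (hs : s = {x : V | x ∉ C} ∪ {c}) (hcs : c ∈ s) :
    ∀ n : ℕ, ∀ x y : V, ∀ hx : x ∈ s, ∀ hy : y ∈ s, G.dist x y ≤ n →
      ∃ p : (G.induce s).Walk ⟨x, hx⟩ ⟨y, hy⟩, p.length ≤ n := by
  intro n
  induction n with
  | zero =>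
    intro x y hx hy hd
    have hxy : x = y := (hG.dist_eq_zero_iff).mp (Nat.le_zero.mp hd)
    subst hxy
    exact ⟨SimpleGraph.Walk.nil, le_rfl⟩
  | succ n ih =>
    intro x y hx hy hd
    by_cases huv : x = y
    · subst huv; exact ⟨SimpleGraph.Walk.nil, Nat.zero_le _⟩
    obtain ⟨p, hp⟩ := (hG x y).exists_walk_length_eq_dist
    cases p with
    | nil => exact absurd rfl huv
    | @cons _ w _ hadj q =>
      simp only [SimpleGraph.Walk.length_cons] at hp
      have hqlen : q.length ≤ n := by omega
      by_cases hws : w ∈ s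
      · have hdw : G.dist w y ≤ n := le_trans (SimpleGraph.dist_le q) hqlen
        obtain ⟨p', hp'⟩ := ih w y hws hy hdw
        have hadj' : (G.induce s).Adj ⟨x, hx⟩ ⟨w, hws⟩ := hadj
        exact ⟨SimpleGraph.Walk.cons hadj' p', by
          simp only [SimpleGraph.Walk.length_cons]; omega⟩
      · -- w ∈ C \ {c}
        have hwC : w ∈ C := by
          by_contra hwC
          exact hws (hs ▸ Or.inl hwC)
        have hwc : insert w (G.neighborSet w) = insert c (G.neighborSet c) := by
          rw [hC] at hwC; exact hwC
        have hu : x ∈ insert c (G.neighborSet c) := by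
          rw [← hwc]; exact Set.mem_insert_of_mem _ hadj.symm
        by_cases hvc : y = c
        · rcases hu with hu | hu
          · exact absurd (hu.trans hvc.symm) huv
          · have hadj' : (G.induce s).Adj ⟨x, hx⟩ ⟨y, hy⟩ := by
              have : G.Adj x y := hvc ▸ (hu : G.Adj c x).symm
              exact this
            exact ⟨SimpleGraph.Walk.cons hadj' SimpleGraph.Walk.nil, by
              simp [SimpleGraph.Walk.length_cons]⟩
        · have hvw : y ≠ w := fun h => hws (h ▸ hy)
          have hdcv : G.dist c y ≤ n := by
            have heq := dist_eq_of_closed hG hwc hvw hvc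
            have hdw : G.dist w y ≤ n := le_trans (SimpleGraph.dist_le q) hqlen
            omega
          rcases hu with hu | hu
          · obtain ⟨p', hp'⟩ := ih x y hx hy (by rw [hu]; exact hdcv)
            exact ⟨p', le_trans hp' (Nat.le_succ n)⟩
          · obtain ⟨p', hp'⟩ := ih c y hcs hy hdcv
            have hadj' : (G.induce s).Adj ⟨x, hx⟩ ⟨c, hcs⟩ := (hu : G.Adj c x).symm
            exact ⟨SimpleGraph.Walk.cons hadj' p', by
              simp only [SimpleGraph.Walk.length_cons]; omega⟩

lemma induce_dist_eq {G : SimpleGraph V} (hG : G.Connected) {c : V} {C s : Set V}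
    (hC : C = {x : V | insert x (G.neighborSet x) = insert c (G.neighborSet c)})
    (hs : s = {x : V | x ∉ C} ∪ {c}) (hcs : c ∈ s) (u v : s) :
    (G.induce s).dist u v = G.dist ↑u ↑v := by
  obtain ⟨p, hp⟩ := induce_walk_le hG hC hs hcs (G.dist ↑u ↑v) ↑u ↑v u.2 v.2 le_rfl
  refine le_antisymm (le_trans (SimpleGraph.dist_le p) hp) ?_
  -- map p into G
  have hr : (G.induce s).Reachable u v := ⟨p⟩
  obtain ⟨q, hq⟩ := hr.exists_walk_length_eq_dist
  have := SimpleGraph.dist_le (q.map (SimpleGraph.Embedding.induce s).toHom)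
  rwa [SimpleGraph.Walk.length_map, hq] at this

lemma my_sum_coe (s : Set V) [Fintype s] (f : V → ℝ) :
    (∑ i : s, f i) = ∑ i ∈ s.toFinset, f i :=
  Finset.sum_set_coe s

set_option maxHeartbeats 2000000 in
/-- Let `G` be a connected graph, `c` a vertex and
`C = [c]_S = {x | N[x] = N[c]}` the class of `c` under the relation "equal closed neighbourhoods".
Let `G' = G ∖ (C ∖ {c})` (the induced subgraph on `(V ∖ C) ∪ {c}`) with weights
`a'(c) = ∑_{x∈C} a(x)`, `b'(c) = ∑_{x∈C} b(x)` and `a' = a`, `b' = b` elsewhere. Then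
`W(G,a,b) = W(G',a',b') + ∑_{{cᵢ,cⱼ}⊆C} (a(cᵢ)b(cⱼ) + a(cⱼ)b(cᵢ))`. -/
theorem wienerDW_reduction_closed [Fintype V] (G : SimpleGraph V) (hG : G.Connected)
    (a b : V → ℝ) (ha : ∀ v, 0 < a v) (hb : ∀ v, 0 < b v) (c : V)
    (C : Set V) (hC : C = {x : V | insert x (G.neighborSet x) = insert c (G.neighborSet c)})
    (s : Set V) (hs : s = {x : V | x ∉ C} ∪ {c})
    (hcs : c ∈ s)
    (a' b' : s → ℝ)
    (ha' : ∀ x : s, a' x = if (x : V) = c then ∑ y ∈ C.toFinset, a y else a (x : V))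
    (hb' : ∀ x : s, b' x = if (x : V) = c then ∑ y ∈ C.toFinset, b y else b (x : V)) :
    G.wienerDW a b = (G.induce s).wienerDW a' b' +
      (1 / 2) * ∑ x ∈ C.toFinset, ∑ y ∈ C.toFinset \ {x},
        (a x * b y + a y * b x) := by
  have hcC : c ∈ C := by rw [hC]; exact Set.mem_setOf.mpr rfl
  set K : Finset V := C.toFinset with hK
  have hmemK : ∀ x, x ∈ K ↔ x ∈ C := fun x => Set.mem_toFinset
  set A : ℝ := ∑ y ∈ K, a y with hA
  set B : ℝ := ∑ y ∈ K, b y with hB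
  set fa : V → ℝ := fun y => if y = c then A else a y with hfa
  set fb : V → ℝ := fun y => if y = c then B else b y with hfb
  set D : V → V → ℝ := fun u v => (G.dist u v : ℝ) with hD
  set T : V → V → ℝ := fun u v => a u * b v + a v * b u with hT
  set F : V → V → ℝ := fun u v => (fa u * fb v + fa v * fb u) * D u v with hF
  -- closed nbhd property
  have hclosed : ∀ x ∈ C, insert x (G.neighborSet x) = insert c (G.neighborSet c) := by
    intro x hx; rw [hC] at hx; exact hx
  -- members of C pairwise adjacent
  have hadjC : ∀ x ∈ C, ∀ y ∈ C, x ≠ y → G.Adj x y := by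
    intro x hx y hy hxy
    have h1 := hclosed x hx
    have h2 := hclosed y hy
    have : y ∈ insert x (G.neighborSet x) := by
      rw [h1, ← h2]; exact Set.mem_insert _ _
    rcases this with h | h
    · exact absurd h.symm hxy
    · exact h
  have hD1 : ∀ x ∈ K, ∀ y ∈ K, x ≠ y → D x y = 1 := by
    intro x hx y hy hxy
    have := SimpleGraph.dist_eq_one_iff_adj.mpr
      (hadjC x ((hmemK x).mp hx) y ((hmemK y).mp hy) hxy)
    simp [hD, this]
  have hDc : ∀ x ∈ K, ∀ z ∉ K, D x z = D c z := by
    intro x hx z hz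
    have hzC : z ∉ C := fun h => hz ((hmemK z).mpr h)
    have hzx : z ≠ x := fun h => hzC (h ▸ (hmemK x).mp hx)
    have hzc : z ≠ c := fun h => hzC (h ▸ hcC)
    simp only [hD]
    exact_mod_cast congrArg (Nat.cast : ℕ → ℝ)
      (dist_eq_of_closed hG (hclosed x ((hmemK x).mp hx)) hzx hzc)
  have hcc : c ∉ Kᶜ := by simp [hmemK, hcC]
  -- s.toFinset
  have hsK : s.toFinset = insert c Kᶜ := by
    ext x
    simp only [Set.mem_toFinset, hs, Set.mem_union, Set.mem_setOf_eq, Set.mem_singleton_iff,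
      Finset.mem_insert, Finset.mem_compl, hmemK]
    tauto
  -- rewrite induced wienerDW
  have hred : (G.induce s).wienerDW a' b' =
      (1 / 2) * ∑ u ∈ insert c Kᶜ, ∑ v ∈ insert c Kᶜ, F u v := by
    rw [SimpleGraph.wienerDW]
    congr 1
    have : ∀ u v : s, (a' u * b' v + a' v * b' u) * ((G.induce s).dist u v : ℝ)
        = F (u : V) (v : V) := by
      intro u v
      rw [ha' u, ha' v, hb' u, hb' v, induce_dist_eq hG hC hs hcs u v]
    calc ∑ u : s, ∑ v : s, (a' u * b' v + a' v * b' u) * ((G.induce s).dist u v : ℝ)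
        = ∑ u : s, ∑ v : s, F (u : V) (v : V) := by
          apply Finset.sum_congr rfl; intro u _; apply Finset.sum_congr rfl; intro v _
          exact this u v
      _ = ∑ u : s, ∑ v ∈ s.toFinset, F (u : V) v := by
          apply Finset.sum_congr rfl; intro u _; exact my_sum_coe s _
      _ = ∑ u ∈ s.toFinset, ∑ v ∈ s.toFinset, F u v := my_sum_coe s (fun u => ∑ v ∈ s.toFinset, F u v)
      _ = ∑ u ∈ insert c Kᶜ, ∑ v ∈ insert c Kᶜ, F u v := by rw [hsK]
  rw [hred, SimpleGraph.wienerDW]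
  -- expand RHS sums
  rw [Finset.sum_insert hcc]
  have hFcc : F c c = 0 := by simp [hF, hD]
  have hsplit2 : ∀ u, ∑ v ∈ insert c Kᶜ, F u v = F u c + ∑ v ∈ Kᶜ, F u v := by
    intro u; rw [Finset.sum_insert hcc]
  simp only [hsplit2, hFcc]
  -- expand LHS
  have hLHS : ∀ u, (∑ v : V, (a u * b v + a v * b u) * (G.dist u v : ℝ))
      = ∑ v ∈ K, T u v * D u v + ∑ v ∈ Kᶜ, T u v * D u v := by
    intro u; rw [Finset.sum_add_sum_compl K (fun v => T u v * D u v)]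
  have hLHS2 : (∑ u : V, ∑ v : V, (a u * b v + a v * b u) * (G.dist u v : ℝ))
      = (∑ u ∈ K, (∑ v ∈ K, T u v * D u v + ∑ v ∈ Kᶜ, T u v * D u v))
        + ∑ u ∈ Kᶜ, (∑ v ∈ K, T u v * D u v + ∑ v ∈ Kᶜ, T u v * D u v) := by
    rw [← Finset.sum_add_sum_compl K]
    congr 1 <;> (apply Finset.sum_congr rfl; intro u _; exact hLHS u)
  rw [hLHS2]
  -- key sub-identities
  have hfaK : ∀ z ∈ Kᶜ, fa z = a z ∧ fb z = b z := by
    intro z hz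
    have : z ≠ c := fun h => (Finset.mem_compl.mp hz) (h ▸ (hmemK c).mpr hcC)
    simp [hfa, hfb, this]
  have E1 : ∑ u ∈ K, ∑ v ∈ K, T u v * D u v = ∑ x ∈ K, ∑ y ∈ K \ {x}, T x y := by
    apply Finset.sum_congr rfl; intro x hx
    rw [Finset.sdiff_singleton_eq_erase, ← Finset.add_sum_erase K (fun v => T x v * D x v) hx]
    have hzero : T x x * D x x = 0 := by simp [hD]
    rw [hzero, zero_add]
    apply Finset.sum_congr rfl; intro y hy
    rw [hD1 x hx y (Finset.mem_of_mem_erase hy) (Finset.ne_of_mem_erase hy).symm, mul_one]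
  have E2 : ∀ z ∈ Kᶜ, ∑ x ∈ K, T x z * D x z = F c z := by
    intro z hz
    obtain ⟨hfaz, hfbz⟩ := hfaK z hz
    have h1 : ∀ x ∈ K, T x z * D x z = (a x * b z + a z * b x) * D c z := by
      intro x hx; rw [hT, hDc x hx z (Finset.mem_compl.mp hz)]
    rw [Finset.sum_congr rfl h1, ← Finset.sum_mul]
    simp only [hF, hfaz, hfbz, hfa, hfb, eq_self_iff_true, if_true]
    rw [Finset.sum_add_distrib, ← Finset.sum_mul, ← Finset.mul_sum, ← hA, ← hB]
    have hzc : z ≠ c := fun h => (Finset.mem_compl.mp hz) (h ▸ (hmemK c).mpr hcC)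
    rw [if_neg hzc, if_neg hzc]
    try ring
  have E3 : ∀ z ∈ Kᶜ, ∑ x ∈ K, T z x * D z x = F z c := by
    intro z hz
    have h1 : ∀ x ∈ K, T z x * D z x = T x z * D x z := by
      intro x hx
      simp only [hT, hD, SimpleGraph.dist_comm (u := z)]
      ring
    rw [Finset.sum_congr rfl h1, E2 z hz]
    simp only [hF, hD, SimpleGraph.dist_comm (u := z)]
    ring
  have E4 : ∀ z ∈ Kᶜ, ∀ w ∈ Kᶜ, T z w * D z w = F z w := by
    intro z hz w hw
    obtain ⟨h1, h2⟩ := hfaK z hz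
    obtain ⟨h3, h4⟩ := hfaK w hw
    simp only [hF, h1, h2, h3, h4, hT]
  -- assemble
  rw [Finset.sum_add_distrib, Finset.sum_add_distrib, E1]
  have hS2 : ∑ x ∈ K, ∑ v ∈ Kᶜ, T x v * D x v = ∑ v ∈ Kᶜ, F c v := by
    rw [Finset.sum_comm]; exact Finset.sum_congr rfl E2
  have hS3 : ∑ x ∈ Kᶜ, ∑ v ∈ K, T x v * D x v = ∑ x ∈ Kᶜ, F x c :=
    Finset.sum_congr rfl E3
  have hS4 : ∑ u ∈ Kᶜ, ∑ v ∈ Kᶜ, T u v * D u v = ∑ u ∈ Kᶜ, ∑ v ∈ Kᶜ, F u v := by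
    apply Finset.sum_congr rfl; intro u hu
    exact Finset.sum_congr rfl (fun v hv => E4 u hu v hv)
  rw [hS2, hS3, hS4, Finset.sum_add_distrib]
  simp only [hT]
  ring

end
end

section
/- Let G be a connected finite simple graph, c ∈ V(G), and C = [c]_R the R-class of c where x R y iff N(x) = N(y). Suppose a(x) = k₁ and b(x) = k₂ for all x ∈ C, where k₁, k₂ > 0. With G', a', b' defined as in the R-reduction (delete C ∖ {c}, and set a'(c) = k₁|C|, b'(c) = k₂|C|), it holds that W(G,a,b) = W(G',a',b') + 2 k₁ k₂ |C| (|C| - 1). -/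
open Finset
open scoped Classical

noncomputable section

variable {V : Type*}

/-!
Twins (vertices with equal open neighbourhoods) in a connected graph are at distance 2 from each
other and at equal distance from every other vertex. So the map `π` collapsing the twin class `C`
onto `c` is a graph homomorphism retracting `G` onto `G' = G[(V ∖ C) ∪ {c}]`, hence `G'` is
isometrically embedded in `G`, and `d_G(u, v) = d_G'(π u, π v)` except for distinct twins,
where the difference is 2. With `S(a, b) = ∑_{u,v} a(u) b(v) d(u, v)` we have
`W = (S(a, b) + S(b, a)) / 2`, and summing over the fibres of `π` gives
`S_G(a, b) = S_G'(a', b') + 2 k₁ k₂ |C| (|C| - 1)`.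
-/

section FiberSums

variable {ι κ R : Type*} [Fintype ι] [Fintype κ] [DecidableEq κ]

theorem sum_mul_comp_eq_sum_fiberwise [NonUnitalNonAssocSemiring R] (g : ι → κ) (f : ι → R)
    (h : κ → R) : ∑ i, f i * h (g i) = ∑ j, (∑ i with g i = j, f i) * h j := by
  rw [← sum_fiberwise univ g (fun i => f i * h (g i))]
  refine sum_congr rfl fun j _ => ?_
  rw [sum_mul]
  exact sum_congr rfl fun i hi => by rw [(mem_filter.1 hi).2]

theorem sum_sum_mul_comp_eq_sum_fiberwise [CommSemiring R] (g : ι → κ) (α β : ι → R)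
    (f : κ → κ → R) :
    ∑ u, ∑ v, α u * β v * f (g u) (g v) =
      ∑ x, ∑ y, (∑ u with g u = x, α u) * (∑ v with g v = y, β v) * f x y := by
  calc ∑ u, ∑ v, α u * β v * f (g u) (g v)
      = ∑ u, α u * ∑ y, (∑ v with g v = y, β v) * f (g u) y := by
        refine sum_congr rfl fun u _ => ?_
        rw [← sum_mul_comp_eq_sum_fiberwise g β (f (g u)), mul_sum]
        simp only [mul_assoc]
    _ = ∑ x, (∑ u with g u = x, α u) * ∑ y, (∑ v with g v = y, β v) * f x y :=
        sum_mul_comp_eq_sum_fiberwise g α (fun x => ∑ y, (∑ v with g v = y, β v) * f x y)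
    _ = _ := by
        refine sum_congr rfl fun x _ => ?_
        rw [mul_sum]
        exact sum_congr rfl fun y _ => (mul_assoc _ _ _).symm

theorem sum_sum_mul_mul_ite_mem_offDiag [CommRing R] (T : Finset ι) {α β : ι → R} {k l : R}
    (hα : ∀ u ∈ T, α u = k) (hβ : ∀ v ∈ T, β v = l) (m : R) :
    ∑ u, ∑ v, α u * β v * (if u ∈ T ∧ v ∈ T ∧ u ≠ v then m else 0) =
      m * k * l * #T * (#T - 1) := by
  have hsummand : ∀ u v, α u * β v * (if u ∈ T ∧ v ∈ T ∧ u ≠ v then m else 0) =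
      if (u, v) ∈ T.offDiag then m * k * l else 0 := by
    intro u v
    by_cases huv : (u, v) ∈ T.offDiag
    · obtain ⟨hu, hv, hne⟩ := mem_offDiag.1 huv
      rw [if_pos ⟨hu, hv, hne⟩, if_pos huv, hα u hu, hβ v hv]
      ring
    · rw [if_neg fun h => huv (mem_offDiag.2 h), if_neg huv, mul_zero]
  simp only [hsummand]
  rw [← Fintype.sum_prod_type' (fun u v => if (u, v) ∈ T.offDiag then m * k * l else 0),
    sum_ite_mem, univ_inter, sum_const, offDiag_card, nsmul_eq_mul,
    Nat.cast_sub (Nat.le_mul_self #T)]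
  push_cast
  ring

end FiberSums

def twinCollapse (C : Set V) (c : V) (x : V) : ({x | x ∉ C} ∪ {c} : Set V) :=
  if hx : x ∈ C then ⟨c, Or.inr rfl⟩ else ⟨x, Or.inl hx⟩

section TwinCollapse

variable {C : Set V} {c : V}

theorem twinCollapse_of_mem {x : V} (hx : x ∈ C) : (twinCollapse C c x : V) = c := by
  simp [twinCollapse, hx]

theorem twinCollapse_of_notMem {x : V} (hx : x ∉ C) : (twinCollapse C c x : V) = x := by
  simp [twinCollapse, hx]

theorem twinCollapse_apply_coe (hcC : c ∈ C) (x : ({x | x ∉ C} ∪ {c} : Set V)) :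
    twinCollapse C c x = x := by
  apply Subtype.ext
  rcases x.2 with hx | hx
  · exact twinCollapse_of_notMem hx
  · have hxc : (x : V) = c := hx
    rw [twinCollapse_of_mem (by rwa [hxc]), hxc]

theorem sum_twinCollapse_fiber [Fintype V] (hcC : c ∈ C) {α : V → ℝ} {k : ℝ}
    (hα : ∀ u ∈ C, α u = k) (x : ({x | x ∉ C} ∪ {c} : Set V)) :
    ∑ u with twinCollapse C c u = x, α u = if (x : V) = c then k * #C.toFinset else α x := by
  split_ifs with hxc
  · have hfiber : univ.filter (fun u => twinCollapse C c u = x) = C.toFinset := by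
      ext u
      simp only [mem_filter, mem_univ, true_and, Set.mem_toFinset, ← Subtype.coe_inj, hxc]
      by_cases hu : u ∈ C
      · simp [twinCollapse_of_mem hu, hu]
      · rw [twinCollapse_of_notMem hu]
        exact iff_of_false (fun h => hu (h ▸ hcC)) hu
    rw [hfiber, sum_congr rfl fun u hu => hα u (Set.mem_toFinset.1 hu), sum_const,
      nsmul_eq_mul, mul_comm]
  · have hxC : (x : V) ∉ C := fun h => hxc (x.2.resolve_left (not_not.2 h))
    have hfiber : univ.filter (fun u => twinCollapse C c u = x) = {(x : V)} := by
      ext u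
      simp only [mem_filter, mem_univ, true_and, mem_singleton, ← Subtype.coe_inj]
      by_cases hu : u ∈ C
      · rw [twinCollapse_of_mem hu]
        exact iff_of_false (Ne.symm hxc) (fun h => hxC (h ▸ hu))
      · rw [twinCollapse_of_notMem hu]
    rw [hfiber, sum_singleton]

end TwinCollapse

namespace SimpleGraph

variable {G : SimpleGraph V}

def distPairing [Fintype V] (G : SimpleGraph V) (a b : V → ℝ) : ℝ :=
  ∑ u, ∑ v, a u * b v * (G.dist u v : ℝ)

theorem wienerDW_eq_distPairing [Fintype V] (a b : V → ℝ) :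
    G.wienerDW a b = (G.distPairing a b + G.distPairing b a) / 2 := by
  simp only [wienerDW, distPairing, ← sum_add_distrib, sum_div, mul_sum]
  exact sum_congr rfl fun u _ => sum_congr rfl fun v _ => by ring

theorem twinCollapse_adj {C : Set V} {c : V}
    (htwin : ∀ x ∈ C, G.neighborSet x = G.neighborSet c) {p q : V} (h : G.Adj p q) :
    (G.induce ({x | x ∉ C} ∪ {c})).Adj (twinCollapse C c p) (twinCollapse C c q) := by
  have hadj_c : ∀ {x y}, x ∈ C → G.Adj x y → G.Adj c y := fun hx hxy => by
    rwa [← mem_neighborSet, ← htwin _ hx]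
  unfold twinCollapse
  split_ifs with hp hq hq
  · exact (G.irrefl (hadj_c hq (hadj_c hp h).symm)).elim
  · exact hadj_c hp h
  · exact (hadj_c hq h.symm).symm
  · exact h

namespace Connected

theorem dist_le_of_neighborSet_eq (hG : G.Connected) {u v w : V}
    (h : G.neighborSet u = G.neighborSet v) (huw : u ≠ w) : G.dist v w ≤ G.dist u w := by
  obtain ⟨p, hp⟩ := hG.exists_walk_length_eq_dist u w
  cases p with
  | nil => exact absurd rfl huw
  | @cons _ x _ hadj p =>
    have hadj' : G.Adj v x := by rw [← mem_neighborSet, ← h]; exact hadj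
    rw [← hp]
    exact dist_le (Walk.cons hadj' p)

theorem dist_eq_of_neighborSet_eq (hG : G.Connected) {u v w : V}
    (h : G.neighborSet u = G.neighborSet v) (huw : u ≠ w) (hvw : v ≠ w) :
    G.dist u w = G.dist v w :=
  le_antisymm (hG.dist_le_of_neighborSet_eq h.symm hvw) (hG.dist_le_of_neighborSet_eq h huw)

theorem dist_eq_two_of_neighborSet_eq (hG : G.Connected) {u v : V}
    (h : G.neighborSet u = G.neighborSet v) (huv : u ≠ v) : G.dist u v = 2 := by
  have hnadj : ¬G.Adj u v := fun hadj => G.irrefl (by rwa [← mem_neighborSet, ← h])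
  obtain ⟨p, -⟩ := hG.exists_walk_length_eq_dist u v
  cases p with
  | nil => exact absurd rfl huv
  | @cons _ x _ hadj _ =>
    have hadj' : G.Adj v x := by rw [← mem_neighborSet, ← h]; exact hadj
    have hedist : G.edist u v = 2 := edist_eq_two_iff.2 ⟨huv, hnadj, x, hadj, hadj'⟩
    exact_mod_cast (hG.preconnected u v).coe_dist_eq_edist.trans hedist

theorem induce_dist_eq_of_retraction (hG : G.Connected) {s : Set V} (π : G →g G.induce s)
    (hπ : ∀ x : s, π x = x) (x y : s) : (G.induce s).dist x y = G.dist x y := by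
  obtain ⟨p, hp⟩ := hG.exists_walk_length_eq_dist x y
  have hreach : (G.induce s).Reachable x y := by
    simpa only [hπ] using (hG.preconnected x y).map π
  obtain ⟨q, hq⟩ := hreach.exists_walk_length_eq_dist
  apply le_antisymm
  · simpa [hp] using dist_le ((p.map π).copy (hπ x) (hπ y))
  · have := dist_le (q.map (Embedding.induce s).toHom)
    rwa [Walk.length_map, hq] at this

theorem dist_twinCollapse_add (hG : G.Connected) {C : Set V} {c : V} (hcC : c ∈ C)
    (htwin : ∀ x ∈ C, G.neighborSet x = G.neighborSet c) (u v : V) :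
    G.dist (twinCollapse C c u) (twinCollapse C c v) +
      (if u ∈ C ∧ v ∈ C ∧ u ≠ v then 2 else 0) = G.dist u v := by
  by_cases hu : u ∈ C <;> by_cases hv : v ∈ C
  · rw [twinCollapse_of_mem hu, twinCollapse_of_mem hv, dist_self, zero_add]
    by_cases huv : u = v
    · subst huv
      simp
    · rw [if_pos ⟨hu, hv, huv⟩,
        hG.dist_eq_two_of_neighborSet_eq ((htwin u hu).trans (htwin v hv).symm) huv]
  · rw [twinCollapse_of_mem hu, twinCollapse_of_notMem hv, if_neg fun h => hv h.2.1, add_zero]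
    exact (hG.dist_eq_of_neighborSet_eq (htwin u hu) (ne_of_mem_of_not_mem hu hv)
      (ne_of_mem_of_not_mem hcC hv)).symm
  · rw [twinCollapse_of_notMem hu, twinCollapse_of_mem hv, if_neg fun h => hu h.1, add_zero,
      dist_comm, G.dist_comm (u := u)]
    exact (hG.dist_eq_of_neighborSet_eq (htwin v hv) (ne_of_mem_of_not_mem hv hu)
      (ne_of_mem_of_not_mem hcC hu)).symm
  · rw [twinCollapse_of_notMem hu, twinCollapse_of_notMem hv, if_neg fun h => hu h.1, add_zero]

theorem distPairing_eq_induce_add [Fintype V] (hG : G.Connected) {C s : Set V} {c : V}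
    (hcC : c ∈ C) (htwin : ∀ x ∈ C, G.neighborSet x = G.neighborSet c)
    (hs : s = {x | x ∉ C} ∪ {c}) {α β : V → ℝ} {k l : ℝ} (hα : ∀ x ∈ C, α x = k)
    (hβ : ∀ x ∈ C, β x = l) {α' β' : s → ℝ}
    (hα' : ∀ x : s, α' x = if (x : V) = c then k * C.toFinset.card else α x)
    (hβ' : ∀ x : s, β' x = if (x : V) = c then l * C.toFinset.card else β x) :
    G.distPairing α β = (G.induce s).distPairing α' β' +
      2 * k * l * C.toFinset.card * (C.toFinset.card - 1) := by
  subst hs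
  have hdist : ∀ u v, (G.dist u v : ℝ) =
      (G.induce _).dist (twinCollapse C c u) (twinCollapse C c v) +
        if u ∈ C.toFinset ∧ v ∈ C.toFinset ∧ u ≠ v then 2 else 0 := by
    intro u v
    simp only [Set.mem_toFinset]
    rw [hG.induce_dist_eq_of_retraction ⟨twinCollapse C c, twinCollapse_adj htwin⟩
      (twinCollapse_apply_coe hcC), ← hG.dist_twinCollapse_add hcC htwin u v]
    push_cast
    rfl
  calc G.distPairing α β
      = ∑ u, ∑ v, α u * β v *
            ((G.induce _).dist (twinCollapse C c u) (twinCollapse C c v) : ℝ) +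
          ∑ u, ∑ v, α u * β v *
            (if u ∈ C.toFinset ∧ v ∈ C.toFinset ∧ u ≠ v then 2 else 0) := by
        simp only [distPairing, hdist, mul_add, sum_add_distrib]
    _ = _ := by
        rw [sum_sum_mul_comp_eq_sum_fiberwise (twinCollapse C c) α β
            (fun x y => ((G.induce _).dist x y : ℝ)),
          sum_sum_mul_mul_ite_mem_offDiag _ (fun u hu => hα u (Set.mem_toFinset.1 hu))
            (fun v hv => hβ v (Set.mem_toFinset.1 hv))]
        simp only [sum_twinCollapse_fiber hcC hα, sum_twinCollapse_fiber hcC hβ,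
          ← hα', ← hβ']
        -- the fibre sums are indexed by the `Fintype` instance found for the union, not by `s`'s
        unfold distPairing
        convert rfl

end Connected

end SimpleGraph

theorem wienerDW_reduction_const_general [Fintype V] (G : SimpleGraph V) (hG : G.Connected)
    (a b : V → ℝ) (c : V)
    (C : Set V) (hC : C = {x : V | G.neighborSet x = G.neighborSet c})
    (k₁ k₂ : ℝ)
    (hak : ∀ x ∈ C, a x = k₁) (hbk : ∀ x ∈ C, b x = k₂)
    (s : Set V) (hs : s = {x : V | x ∉ C} ∪ {c})
    (a' b' : s → ℝ)
    (ha' : ∀ x : s, a' x = if (x : V) = c then k₁ * C.toFinset.card else a (x : V))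
    (hb' : ∀ x : s, b' x = if (x : V) = c then k₂ * C.toFinset.card else b (x : V)) :
    G.wienerDW a b = (G.induce s).wienerDW a' b' +
      2 * k₁ * k₂ * C.toFinset.card * (C.toFinset.card - 1) := by
  have hcC : c ∈ C := by rw [hC]; rfl
  have htwin : ∀ x ∈ C, G.neighborSet x = G.neighborSet c := by rw [hC]; exact fun x hx => hx
  rw [G.wienerDW_eq_distPairing, (G.induce s).wienerDW_eq_distPairing,
    hG.distPairing_eq_induce_add hcC htwin hs hak hbk ha' hb',
    hG.distPairing_eq_induce_add hcC htwin hs hbk hak hb' ha']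
  ring

/-- Let `G` be connected, `c ∈ V(G)`, `C = [c]_R` the class of `c` for the
relation `x R y ↔ N(x) = N(y)`, and suppose `a ≡ k₁`, `b ≡ k₂` on `C` with `k₁, k₂ > 0`.
With `G' = G ∖ (C ∖ {c})` and `a'(c) = k₁|C|`, `b'(c) = k₂|C|` (and `a' = a`, `b' = b` elsewhere),
`W(G,a,b) = W(G',a',b') + 2 k₁ k₂ |C| (|C| − 1)`. -/
theorem wienerDW_reduction_const [Fintype V] (G : SimpleGraph V) (hG : G.Connected)
    (a b : V → ℝ) (ha : ∀ v, 0 < a v) (hb : ∀ v, 0 < b v) (c : V)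
    (C : Set V) (hC : C = {x : V | G.neighborSet x = G.neighborSet c})
    (k₁ k₂ : ℝ) (hk₁ : 0 < k₁) (hk₂ : 0 < k₂)
    (hak : ∀ x ∈ C, a x = k₁) (hbk : ∀ x ∈ C, b x = k₂)
    (s : Set V) (hs : s = {x : V | x ∉ C} ∪ {c})
    (hcs : c ∈ s)
    (a' b' : s → ℝ)
    (ha' : ∀ x : s, a' x = if (x : V) = c then k₁ * C.toFinset.card else a (x : V))
    (hb' : ∀ x : s, b' x = if (x : V) = c then k₂ * C.toFinset.card else b (x : V)) :
    G.wienerDW a b = (G.induce s).wienerDW a' b' +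
      2 * k₁ * k₂ * C.toFinset.card * (C.toFinset.card - 1) :=
  wienerDW_reduction_const_general G hG a b c C hC k₁ k₂ hak hbk s hs a' b' ha' hb'

end
end

section
/- For a weighted path P on 2n−3 vertices (n ≥ 3) whose vertices along the path carry weight pairs (a,b): endpoints (21,8), and interior vertices alternating (6,3), (10,3), (6,3), ..., (6,3) (so that the n−2 odd-position interior vertices have weights (6,3) and the remaining interior vertices have weights (10,3)), the double-weighted Wiener index equals W(P, a, b) = 64n³ + 16n² − 402n + 228, where W(P,a,b) = Σ_{{u,v}} (a(u)b(v) + a(v)b(u)) d(u,v). -/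
open Finset

noncomputable section

/-- The weight `a` on the path `P_{2n−3}` (0-indexed: vertex `k` is `v_{k+1}`):
endpoints have `a = 21`; interior vertices at even path-positions (odd index) have `a = 6`,
interior vertices at odd path-positions (even index) have `a = 10`. -/
def pathWeightA (n : ℕ) (k : Fin (2 * n - 3)) : ℝ :=
  if (k : ℕ) = 0 ∨ (k : ℕ) = 2 * n - 4 then 21
  else if (k : ℕ) % 2 = 1 then 6 else 10

/-- The weight `b` on `P_{2n−3}`: endpoints have `b = 8`, interior vertices `b = 3`. -/
def pathWeightB (n : ℕ) (k : Fin (2 * n - 3)) : ℝ :=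
  if (k : ℕ) = 0 ∨ (k : ℕ) = 2 * n - 4 then 8 else 3

def aW (m k : ℕ) : ℝ := if k = 0 ∨ k = m - 1 then 21 else if k % 2 = 1 then 6 else 10
def bW (m k : ℕ) : ℝ := if k = 0 ∨ k = m - 1 then 8 else 3

def WW (m : ℕ) : ℝ :=
  ∑ j ∈ range m, ∑ i ∈ range j, (aW m i * bW m j + aW m j * bW m i) * ((j : ℝ) - (i : ℝ))

def wA (k : ℕ) : ℝ := if k = 0 then 21 else if k % 2 = 1 then 6 else 10
def wB (k : ℕ) : ℝ := if k = 0 then 8 else 3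

lemma altsum (x y p : ℝ) : ∀ K : ℕ,
    ∑ i ∈ range (2*K), (if i % 2 = 1 then x else y) * (p - (i:ℝ))
      = (x+y)*K*p - x*K^2 - y*K*(K-1) := by
  intro K
  induction K with
  | zero => simp
  | succ K ih =>
    have h2 : 2*(K+1) = (2*K+1)+1 := by ring
    rw [h2, sum_range_succ, sum_range_succ, ih]
    rw [if_neg (by omega : ¬ (2*K) % 2 = 1), if_pos (by omega : (2*K+1) % 2 = 1)]
    push_cast
    ring

lemma inner_closed (c d p : ℝ) (M : ℕ) :
    ∑ i ∈ range (M+1), (wA i * c + d * wB i) * (p - (i:ℝ))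
      = (21*c + 8*d)*p
        + ∑ i ∈ range M, (if i % 2 = 1 then 10*c+3*d else 6*c+3*d) * ((p-1) - (i:ℝ)) := by
  rw [Finset.sum_range_succ']
  have h0 : (wA 0 * c + d * wB 0) * (p - ((0:ℕ):ℝ)) = (21*c + 8*d)*p := by
    simp only [wA, wB, if_pos rfl]
    push_cast
    ring
  rw [h0]
  have : ∀ i ∈ range M, (wA (i+1) * c + d * wB (i+1)) * (p - ((i+1:ℕ):ℝ))
      = (if i % 2 = 1 then 10*c+3*d else 6*c+3*d) * ((p-1) - (i:ℝ)) := by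
    intro i _
    by_cases h : i % 2 = 1
    · rw [if_pos h]
      have hA : wA (i+1) = 10 := by
        simp only [wA, if_neg (by omega : ¬ i+1 = 0), if_neg (by omega : ¬ (i+1) % 2 = 1)]
      have hB : wB (i+1) = 3 := by simp [wB]
      rw [hA, hB]; push_cast; ring
    · rw [if_neg h]
      have hA : wA (i+1) = 6 := by
        simp only [wA, if_neg (by omega : ¬ i+1 = 0), if_pos (by omega : (i+1) % 2 = 1)]
      have hB : wB (i+1) = 3 := by simp [wB]
      rw [hA, hB]; push_cast; ring
  rw [Finset.sum_congr rfl this]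
  ring

lemma double_off (f : ℕ → ℕ → ℝ) (hsym : ∀ i j, f i j = f j i) (hdiag : ∀ i, f i i = 0) :
    ∀ m, ∑ i ∈ range m, ∑ j ∈ range m, f i j = 2 * ∑ j ∈ range m, ∑ i ∈ range j, f i j := by
  intro m
  induction m with
  | zero => simp
  | succ m ih =>
    simp only [Finset.sum_range_succ]
    rw [Finset.sum_add_distrib, ih, hdiag]
    rw [Finset.sum_congr rfl (fun x _ => hsym m x)]
    ring

lemma aW_pure (m k i : ℕ) (hm : m - 1 = 2*k+4) (hi : i < 2*k+4) : aW m i = wA i := by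
  simp only [aW, wA, hm]
  have : (i = 0 ∨ i = 2*k+4) ↔ i = 0 := by omega
  simp only [this]

lemma bW_pure (m k i : ℕ) (hm : m - 1 = 2*k+4) (hi : i < 2*k+4) : bW m i = wB i := by
  simp only [bW, wB, hm]
  have : (i = 0 ∨ i = 2*k+4) ↔ i = 0 := by omega
  simp only [this]

lemma aW_pure' (k i : ℕ) (hi : i < 2*k+2) : aW (2*k+3) i = wA i := by
  simp only [aW, wA, show 2*k+3-1 = 2*k+2 from by omega]
  have : (i = 0 ∨ i = 2*k+2) ↔ i = 0 := by omega
  simp only [this]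

lemma bW_pure' (k i : ℕ) (hi : i < 2*k+2) : bW (2*k+3) i = wB i := by
  simp only [bW, wB, show 2*k+3-1 = 2*k+2 from by omega]
  have : (i = 0 ∨ i = 2*k+2) ↔ i = 0 := by omega
  simp only [this]

lemma Feven (c d p : ℝ) (k : ℕ) :
    ∑ i ∈ range (2*k+2), (wA i * c + d * wB i) * (p - (i:ℝ))
      = (21*c+8*d)*p + ((10*c+3*d)+(6*c+3*d))*(k:ℝ)*(p-1)
        - (10*c+3*d)*(k:ℝ)^2 - (6*c+3*d)*(k:ℝ)*((k:ℝ)-1)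
        + (6*c+3*d)*((p-1) - 2*(k:ℝ)) := by
  rw [show 2*k+2 = (2*k+1)+1 from rfl, inner_closed, sum_range_succ, altsum,
      if_neg (by omega : ¬ (2*k) % 2 = 1)]
  push_cast; ring

lemma Fodd (c d p : ℝ) (k : ℕ) :
    ∑ i ∈ range (2*k+3), (wA i * c + d * wB i) * (p - (i:ℝ))
      = (21*c+8*d)*p + ((10*c+3*d)+(6*c+3*d))*((k:ℝ)+1)*(p-1)
        - (10*c+3*d)*((k:ℝ)+1)^2 - (6*c+3*d)*((k:ℝ)+1)*(k:ℝ) := by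
  rw [show 2*k+3 = (2*k+2)+1 from rfl, inner_closed,
      show 2*k+2 = 2*(k+1) from by ring, altsum]
  push_cast; ring

lemma Feven2 (c d p : ℝ) (k : ℕ) :
    ∑ i ∈ range (2*k+4), (wA i * c + d * wB i) * (p - (i:ℝ))
      = (21*c+8*d)*p + ((10*c+3*d)+(6*c+3*d))*((k:ℝ)+1)*(p-1)
        - (10*c+3*d)*((k:ℝ)+1)^2 - (6*c+3*d)*((k:ℝ)+1)*(k:ℝ)
        + (6*c+3*d)*((p-1) - (2*(k:ℝ)+2)) := by
  rw [show 2*k+4 = (2*k+3)+1 from rfl, inner_closed, sum_range_succ,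
      show 2*k+2 = 2*(k+1) from by ring, altsum,
      if_neg (by omega : ¬ (2*(k+1)) % 2 = 1)]
  push_cast; ring

lemma WWval : ∀ k : ℕ, WW (2*k+3) = 64*(k:ℝ)^3 + 592*(k:ℝ)^2 + 1422*(k:ℝ) + 894 := by
  intro k
  induction k with
  | zero =>
    norm_num [WW, aW, bW, Finset.sum_range_succ]
  | succ k ih =>
    have hpeel : ∀ (g : ℕ → ℝ), ∑ j ∈ range (2*k+5), g j
        = ∑ j ∈ range (2*k+2), g j + g (2*k+2) + g (2*k+3) + g (2*k+4) := by
      intro g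
      rw [show 2*k+5 = (2*k+4)+1 from rfl, sum_range_succ,
          show 2*k+4 = (2*k+3)+1 from rfl, sum_range_succ,
          show 2*k+3 = (2*k+2)+1 from rfl, sum_range_succ]
    have hpeel3 : ∀ (g : ℕ → ℝ), ∑ j ∈ range (2*k+3), g j
        = ∑ j ∈ range (2*k+2), g j + g (2*k+2) := by
      intro g
      rw [show 2*k+3 = (2*k+2)+1 from rfl, sum_range_succ]
    have w1 : aW (2*k+5) (2*k+2) = 10 := by
      simp only [aW]
      rw [if_neg (by omega), if_neg (by omega)]
    have w2 : aW (2*k+5) (2*k+3) = 6 := by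
      simp only [aW]
      rw [if_neg (by omega), if_pos (by omega)]
    have w3 : aW (2*k+5) (2*k+4) = 21 := by
      simp only [aW]
      rw [if_pos (by omega)]
    have wb1 : bW (2*k+5) (2*k+2) = 3 := by
      simp only [bW]
      rw [if_neg (by omega)]
    have wb2 : bW (2*k+5) (2*k+3) = 3 := by
      simp only [bW]
      rw [if_neg (by omega)]
    have wb3 : bW (2*k+5) (2*k+4) = 8 := by
      simp only [bW]
      rw [if_pos (by omega)]
    have w0 : aW (2*k+3) (2*k+2) = 21 := by
      simp only [aW]
      rw [if_pos (by omega)]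
    have wb0 : bW (2*k+3) (2*k+2) = 8 := by
      simp only [bW]
      rw [if_pos (by omega)]
    have hstep : WW (2*(k+1)+3) = WW (2*k+3) + (192*(k:ℝ)^2 + 1376*(k:ℝ) + 2078) := by
      rw [show 2*(k+1)+3 = 2*k+5 from by ring]
      unfold WW
      rw [hpeel]
      have e0 : ∀ j ∈ range (2*k+2),
          (∑ i ∈ range j, (aW (2*k+5) i * bW (2*k+5) j + aW (2*k+5) j * bW (2*k+5) i) * ((j:ℝ)-(i:ℝ)))
          = ∑ i ∈ range j, (aW (2*k+3) i * bW (2*k+3) j + aW (2*k+3) j * bW (2*k+3) i) * ((j:ℝ)-(i:ℝ)) := by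
        intro j hj
        simp only [mem_range] at hj
        refine sum_congr rfl fun i hi => ?_
        simp only [mem_range] at hi
        rw [aW_pure (2*k+5) k i (by omega) (by omega), aW_pure (2*k+5) k j (by omega) (by omega),
            bW_pure (2*k+5) k i (by omega) (by omega), bW_pure (2*k+5) k j (by omega) (by omega),
            aW_pure' k i (by omega), aW_pure' k j (by omega),
            bW_pure' k i (by omega), bW_pure' k j (by omega)]
      rw [sum_congr rfl e0]
      have t1 : (∑ i ∈ range (2*k+2),
            (aW (2*k+5) i * bW (2*k+5) (2*k+2) + aW (2*k+5) (2*k+2) * bW (2*k+5) i) * (((2*k+2:ℕ):ℝ)-(i:ℝ)))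
          = ∑ i ∈ range (2*k+2), (wA i * 3 + 10 * wB i) * (((2*k+2:ℕ):ℝ)-(i:ℝ)) := by
        refine sum_congr rfl fun i hi => ?_
        simp only [mem_range] at hi
        rw [w1, wb1, aW_pure (2*k+5) k i (by omega) (by omega),
            bW_pure (2*k+5) k i (by omega) (by omega)]
      have t2 : (∑ i ∈ range (2*k+3),
            (aW (2*k+5) i * bW (2*k+5) (2*k+3) + aW (2*k+5) (2*k+3) * bW (2*k+5) i) * (((2*k+3:ℕ):ℝ)-(i:ℝ)))
          = ∑ i ∈ range (2*k+3), (wA i * 3 + 6 * wB i) * (((2*k+3:ℕ):ℝ)-(i:ℝ)) := by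
        refine sum_congr rfl fun i hi => ?_
        simp only [mem_range] at hi
        rw [w2, wb2, aW_pure (2*k+5) k i (by omega) (by omega),
            bW_pure (2*k+5) k i (by omega) (by omega)]
      have t3 : (∑ i ∈ range (2*k+4),
            (aW (2*k+5) i * bW (2*k+5) (2*k+4) + aW (2*k+5) (2*k+4) * bW (2*k+5) i) * (((2*k+4:ℕ):ℝ)-(i:ℝ)))
          = ∑ i ∈ range (2*k+4), (wA i * 8 + 21 * wB i) * (((2*k+4:ℕ):ℝ)-(i:ℝ)) := by
        refine sum_congr rfl fun i hi => ?_
        simp only [mem_range] at hi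
        rw [w3, wb3, aW_pure (2*k+5) k i (by omega) (by omega),
            bW_pure (2*k+5) k i (by omega) (by omega)]
      have t0 : (∑ i ∈ range (2*k+2),
            (aW (2*k+3) i * bW (2*k+3) (2*k+2) + aW (2*k+3) (2*k+2) * bW (2*k+3) i) * (((2*k+2:ℕ):ℝ)-(i:ℝ)))
          = ∑ i ∈ range (2*k+2), (wA i * 8 + 21 * wB i) * (((2*k+2:ℕ):ℝ)-(i:ℝ)) := by
        refine sum_congr rfl fun i hi => ?_
        simp only [mem_range] at hi
        rw [w0, wb0, aW_pure' k i (by omega), bW_pure' k i (by omega)]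
      rw [t1, t2, t3, Feven 3 10, Fodd 3 6, Feven2 8 21, hpeel3, t0, Feven 8 21]
      push_cast
      ring
    rw [show 2*(k+1)+3 = 2*(k+1)+3 from rfl] at hstep
    rw [hstep, ih]
    push_cast
    ring

lemma fin_to_range (m : ℕ) (F : ℕ → ℕ → ℝ) :
    ∑ i : Fin m, ∑ j : Fin m, F i j = ∑ i ∈ range m, ∑ j ∈ range m, F i j := by
  rw [← Fin.sum_univ_eq_sum_range (fun i => ∑ j ∈ range m, F i j) m]
  exact Finset.sum_congr rfl fun i _ => (Fin.sum_univ_eq_sum_range (fun j => F i j) m)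

/-- For the path `P_{2n−3}` (`n ≥ 3`), with `d(vᵢ,vⱼ) = |i − j|`, endpoint
weights `(21,8)` and interior weights alternating `(6,3), (10,3), (6,3), …, (6,3)`, the
double-weighted Wiener index is `W(P,a,b) = 64n³ + 16n² − 402n + 228`. -/
theorem wiener_alternating_path (n : ℕ) (hn : 3 ≤ n) :
    (1 / 2 : ℝ) * ∑ i : Fin (2 * n - 3), ∑ j : Fin (2 * n - 3),
        (pathWeightA n i * pathWeightB n j + pathWeightA n j * pathWeightB n i) *
          |(i : ℝ) - (j : ℝ)| =
      64 * (n : ℝ) ^ 3 + 16 * (n : ℝ) ^ 2 - 402 * (n : ℝ) + 228 := by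
  obtain ⟨k, rfl⟩ : ∃ k, n = k + 3 := ⟨n - 3, by omega⟩
  have hpa : ∀ i : Fin (2*(k+3)-3), pathWeightA (k+3) i = aW (2*k+3) (i:ℕ) := by
    intro i
    simp only [pathWeightA, aW]
    have h1 : ((i:ℕ) = 0 ∨ (i:ℕ) = 2*(k+3)-4) ↔ ((i:ℕ) = 0 ∨ (i:ℕ) = 2*k+3-1) := by omega
    simp only [h1]
  have hpb : ∀ i : Fin (2*(k+3)-3), pathWeightB (k+3) i = bW (2*k+3) (i:ℕ) := by
    intro i
    simp only [pathWeightB, bW]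
    have h1 : ((i:ℕ) = 0 ∨ (i:ℕ) = 2*(k+3)-4) ↔ ((i:ℕ) = 0 ∨ (i:ℕ) = 2*k+3-1) := by omega
    simp only [h1]
  simp only [hpa, hpb]
  have key := fin_to_range (2*(k+3)-3)
      (fun a b => (aW (2*k+3) a * bW (2*k+3) b + aW (2*k+3) b * bW (2*k+3) a) * |(a:ℝ) - (b:ℝ)|)
  beta_reduce at key
  rw [key, show 2*(k+3)-3 = 2*k+3 from by omega]
  have hsym : ∀ i j : ℕ,
      (aW (2*k+3) i * bW (2*k+3) j + aW (2*k+3) j * bW (2*k+3) i) * |(i:ℝ) - (j:ℝ)|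
      = (aW (2*k+3) j * bW (2*k+3) i + aW (2*k+3) i * bW (2*k+3) j) * |(j:ℝ) - (i:ℝ)| := by
    intro i j
    rw [abs_sub_comm]
    ring
  have hdiag : ∀ i : ℕ,
      (aW (2*k+3) i * bW (2*k+3) i + aW (2*k+3) i * bW (2*k+3) i) * |(i:ℝ) - (i:ℝ)| = 0 := by
    intro i; simp
  have dkey := double_off
      (fun a b => (aW (2*k+3) a * bW (2*k+3) b + aW (2*k+3) b * bW (2*k+3) a) * |(a:ℝ) - (b:ℝ)|)
      (fun i j => hsym i j) (fun i => hdiag i) (2*k+3)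
  beta_reduce at dkey
  rw [dkey]
  have habs : ∑ j ∈ range (2*k+3), ∑ i ∈ range j,
      (aW (2*k+3) i * bW (2*k+3) j + aW (2*k+3) j * bW (2*k+3) i) * |(i:ℝ) - (j:ℝ)|
      = WW (2*k+3) := by
    unfold WW
    refine sum_congr rfl fun j hj => sum_congr rfl fun i hi => ?_
    simp only [mem_range] at hi
    have h : |(i:ℝ) - (j:ℝ)| = (j:ℝ) - (i:ℝ) := by
      rw [abs_sub_comm]
      exact abs_of_nonneg (sub_nonneg.mpr (by exact_mod_cast hi.le))
    rw [h]
  rw [habs, WWval]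
  push_cast
  ring

end
end

section
/- Let G be a connected bipartite graph that is a partial cube (i.e., Θ = Θ* and G embeds isometrically in a hypercube), with Θ-classes E₁,...,E_k. For each i, G ∖ E_i has exactly two connected components C_i^1, C_i^2. For double vertex-weights a, b on G, W(G,a,b) = Σ_{i=1}^k ( A₁(Eᵢ)B₂(Eᵢ) + A₂(Eᵢ)B₁(Eᵢ) ), where A_j(Eᵢ) = Σ_{x∈C_i^j} a(x) and B_j(Eᵢ) = Σ_{x∈C_i^j} b(x). -/
open Finset
open scoped Classical

noncomputable section

variable {V : Type*}

/-- The Djoković–Winkler relation `Θ` on edges. -/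
def SimpleGraph.theta (G : SimpleGraph V) (e f : Sym2 V) : Prop :=
  ∃ u₁ v₁ u₂ v₂ : V, e = s(u₁, v₁) ∧ f = s(u₂, v₂) ∧ G.Adj u₁ v₁ ∧ G.Adj u₂ v₂ ∧
    G.dist u₁ u₂ + G.dist v₁ v₂ ≠ G.dist u₁ v₂ + G.dist v₁ u₂

/-- `E` (indexed by `Fin k`) is the family of `Θ`-classes of `G`, where `Θ` itself is an
equivalence on the edge set (the partial cube situation `Θ = Θ*`): a partition of the edge set
into nonempty classes, each class consisting exactly of the edges `Θ`-related to any of its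
members. -/
def IsThetaPartition (G : SimpleGraph V) {k : ℕ} (E : Fin k → Set (Sym2 V)) : Prop :=
  (∀ i, (E i).Nonempty ∧ E i ⊆ G.edgeSet) ∧
  (∀ e ∈ G.edgeSet, ∃! i, e ∈ E i) ∧
  (∀ i, ∀ e ∈ E i, ∀ f ∈ G.edgeSet, (f ∈ E i ↔ G.theta e f))

lemma walk_parity (G : SimpleGraph V) (c : G.Coloring (Fin 2)) {u v : V} (p : G.Walk u v) :
    (c u = c v) ↔ Even p.length := by
  induction p with
  | nil => simp
  | @cons u w v h p ih =>
    have hne : c u ≠ c w := c.valid h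
    simp only [SimpleGraph.Walk.length_cons, Nat.even_add_one, ← ih]
    have hu := (c u).isLt
    have hw := (c w).isLt
    have hv := (c v).isLt
    rw [Fin.ne_iff_vne] at hne
    rw [Fin.ext_iff, Fin.ext_iff]
    omega

lemma adj_dist_cases (G : SimpleGraph V) (hG : G.Connected) (hc : G.Colorable 2)
    {x y : V} (hxy : G.Adj x y) (u : V) :
    G.dist y u = G.dist x u + 1 ∨ G.dist x u = G.dist y u + 1 := by
  obtain ⟨c⟩ := hc
  have hxy1 : G.dist x y = 1 := SimpleGraph.dist_eq_one_iff_adj.2 hxy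
  have h1 : G.dist y u ≤ G.dist x u + 1 := by
    calc G.dist y u ≤ G.dist y x + G.dist x u := hG.dist_triangle
    _ = G.dist x u + 1 := by rw [SimpleGraph.dist_comm, hxy1]; ring
  have h2 : G.dist x u ≤ G.dist y u + 1 := by
    calc G.dist x u ≤ G.dist x y + G.dist y u := hG.dist_triangle
    _ = G.dist y u + 1 := by rw [hxy1]; ring
  obtain ⟨p, hp⟩ := (hG x u).exists_walk_length_eq_dist
  obtain ⟨q, hq⟩ := (hG y u).exists_walk_length_eq_dist
  have hpar1 : (c x = c u) ↔ Even (G.dist x u) := hp ▸ walk_parity G c p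
  have hpar2 : (c y = c u) ↔ Even (G.dist y u) := hq ▸ walk_parity G c q
  have hne : c x ≠ c y := c.valid hxy
  have hx := (c x).isLt
  have hy := (c y).isLt
  have hu := (c u).isLt
  rw [Fin.ne_iff_vne] at hne
  rw [Fin.ext_iff] at hpar1 hpar2
  rcases Nat.even_or_odd (G.dist x u) with he | ho
  · have : (c x).val = (c u).val := hpar1.2 he
    have : ¬ Even (G.dist y u) := by
      intro h; have := hpar2.2 h; omega
    rw [Nat.not_even_iff_odd] at this
    rcases he with ⟨m, hm⟩; rcases this with ⟨m', hm'⟩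
    omega
  · have h1' : ¬ Even (G.dist x u) := Nat.not_even_iff_odd.2 ho
    have hxu : (c x).val ≠ (c u).val := fun h => h1' (hpar1.1 h)
    have : Even (G.dist y u) := by
      by_contra h
      rw [Nat.not_even_iff_odd] at h
      have : (c y).val ≠ (c u).val := fun h2 => (Nat.not_even_iff_odd.2 h) (hpar2.1 h2)
      omega
    have := hpar2.2 this
    rcases ho with ⟨m, hm⟩; rcases ‹Even (G.dist y u)› with ⟨m', hm'⟩
    omega

lemma theta_iff (G : SimpleGraph V) {x y p q : V} (hxy : G.Adj x y) (hpq : G.Adj p q) :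
    G.theta s(x,y) s(p,q) ↔
      G.dist x p + G.dist y q ≠ G.dist x q + G.dist y p := by
  constructor
  · rintro ⟨u₁, v₁, u₂, v₂, he, hf, -, -, hd⟩
    rw [Sym2.eq_iff] at he hf
    rcases he with ⟨rfl, rfl⟩ | ⟨rfl, rfl⟩ <;> rcases hf with ⟨rfl, rfl⟩ | ⟨rfl, rfl⟩ <;>
      omega
  · intro hd
    exact ⟨x, y, p, q, rfl, rfl, hxy, hpq, hd⟩

lemma cross_iff (G : SimpleGraph V) (hG : G.Connected) (hc : G.Colorable 2)
    {x y p q : V} (hxy : G.Adj x y) (hpq : G.Adj p q) :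
    (G.dist x p + G.dist y q ≠ G.dist x q + G.dist y p) ↔
      ¬ ((G.dist x p < G.dist y p) ↔ (G.dist x q < G.dist y q)) := by
  rcases adj_dist_cases G hG hc hxy p with h1 | h1 <;>
    rcases adj_dist_cases G hG hc hxy q with h2 | h2 <;> omega

/-- membership in the class equals crossing the cut of any representative edge -/
lemma mem_class_iff_cross (G : SimpleGraph V) (hG : G.Connected) (hc : G.Colorable 2)
    {k : ℕ} {E : Fin k → Set (Sym2 V)} (hE : IsThetaPartition G E) {i : Fin k}
    {x y : V} (hxy : G.Adj x y) (hxyE : s(x,y) ∈ E i) {p q : V} (hpq : G.Adj p q) :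
    s(p,q) ∈ E i ↔ ¬ ((G.dist x p < G.dist y p) ↔ (G.dist x q < G.dist y q)) := by
  rw [hE.2.2 i s(x,y) hxyE s(p,q) (G.mem_edgeSet.2 hpq), theta_iff G hxy hpq,
    cross_iff G hG hc hxy hpq]

lemma reach_iff_side (G : SimpleGraph V) (hG : G.Connected) (hc : G.Colorable 2)
    {k : ℕ} {E : Fin k → Set (Sym2 V)} (hE : IsThetaPartition G E) {i : Fin k}
    {x y : V} (hxy : G.Adj x y) (hxyE : s(x,y) ∈ E i)
    (Dt Df : (G.deleteEdges (E i)).ConnectedComponent) (hDne : Dt ≠ Df)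
    (hDcover : ∀ v, (G.deleteEdges (E i)).connectedComponentMk v = Dt ∨
      (G.deleteEdges (E i)).connectedComponentMk v = Df)
    (t t' : V) :
    (G.deleteEdges (E i)).Reachable t t' ↔
      ((G.dist x t < G.dist y t) ↔ (G.dist x t' < G.dist y t')) := by
  set G' := G.deleteEdges (E i) with hG'
  have step : ∀ p q : V, G'.Adj p q →
      ((G.dist x p < G.dist y p) ↔ (G.dist x q < G.dist y q)) := by
    intro p q hpq'
    rw [hG', SimpleGraph.deleteEdges_adj] at hpq'
    have := mem_class_iff_cross G hG hc hE hxy hxyE hpq'.1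
    tauto
  have fwd : ∀ t t' : V, G'.Reachable t t' →
      ((G.dist x t < G.dist y t) ↔ (G.dist x t' < G.dist y t')) := by
    intro t t' h
    obtain ⟨w⟩ := h
    induction w with
    | nil => rfl
    | cons h p ih => exact (step _ _ h).trans ih
  constructor
  · exact fwd t t'
  · intro hiff
    have sameS : ∀ a b : V, G'.connectedComponentMk a = G'.connectedComponentMk b →
        ((G.dist x a < G.dist y a) ↔ (G.dist x b < G.dist y b)) := by
      intro a b h
      exact fwd a b (SimpleGraph.ConnectedComponent.exact h)
    have hdyx : G.dist y x = 1 := SimpleGraph.dist_eq_one_iff_adj.2 hxy.symm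
    have hdxy : G.dist x y = 1 := SimpleGraph.dist_eq_one_iff_adj.2 hxy
    have hSx : G.dist x x < G.dist y x := by rw [SimpleGraph.dist_self, hdyx]; omega
    have hSy : ¬ (G.dist x y < G.dist y y) := by rw [SimpleGraph.dist_self, hdxy]; omega
    have hxyne : G'.connectedComponentMk x ≠ G'.connectedComponentMk y := by
      intro h
      exact hSy ((sameS x y h).1 hSx)
    have two : ∀ v : V, G'.connectedComponentMk v = G'.connectedComponentMk x ∨
        G'.connectedComponentMk v = G'.connectedComponentMk y := by
      intro v
      rcases hDcover v with hv | hv <;> rcases hDcover x with hx' | hx' <;>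
        rcases hDcover y with hy' | hy' <;>
        first
          | exact Or.inl (hv.trans hx'.symm)
          | exact Or.inr (hv.trans hy'.symm)
          | exact absurd (hx'.trans hy'.symm) hxyne
    have goal : G'.connectedComponentMk t = G'.connectedComponentMk t' := by
      rcases two t with h1 | h1 <;> rcases two t' with h2 | h2
      · rw [h1, h2]
      · exact absurd ((sameS _ _ h2).1 (hiff.1 ((sameS _ _ h1).2 hSx))) hSy
      · exact absurd ((sameS _ _ h1).1 (hiff.2 ((sameS _ _ h2).2 hSx))) hSy
      · rw [h1, h2]
    exact SimpleGraph.ConnectedComponent.exact goal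

lemma dist_eq_card_sep [Fintype V] (G : SimpleGraph V) (hG : G.Connected) (hc : G.Colorable 2)
    {k : ℕ} {E : Fin k → Set (Sym2 V)} (hE : IsThetaPartition G E)
    (hD : ∀ i : Fin k, ∃ Dt Df : (G.deleteEdges (E i)).ConnectedComponent, Dt ≠ Df ∧
      ∀ v, (G.deleteEdges (E i)).connectedComponentMk v = Dt ∨
        (G.deleteEdges (E i)).connectedComponentMk v = Df) :
    ∀ u v : V, (univ.filter fun i => ¬ (G.deleteEdges (E i)).Reachable u v).card
      = G.dist u v := by
  suffices H : ∀ n : ℕ, ∀ u v : V, G.dist u v = n →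
      (univ.filter fun i => ¬ (G.deleteEdges (E i)).Reachable u v).card = n by
    intro u v; exact H _ u v rfl
  intro n
  induction n with
  | zero =>
    intro u v hd
    have huv : u = v := ((hG u v).dist_eq_zero_iff).1 hd
    subst huv
    rw [Finset.card_eq_zero, Finset.filter_eq_empty_iff]
    intro i _
    simp only [not_not]
    exact SimpleGraph.Reachable.refl u
  | succ n ih =>
    intro u v hd
    obtain ⟨p, hp⟩ := (hG u v).exists_walk_length_eq_dist
    cases p with
    | nil => rw [hd] at hp; simp at hp
    | @cons _ w _ hadj q =>
      rw [SimpleGraph.Walk.length_cons, hd] at hp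
      have hq : q.length = n := by omega
      have hduw : G.dist u w = 1 := SimpleGraph.dist_eq_one_iff_adj.2 hadj
      have hwv : G.dist w v = n := by
        have h1 : G.dist w v ≤ n := hq ▸ SimpleGraph.dist_le q
        have h2 : G.dist u v ≤ G.dist u w + G.dist w v := hG.dist_triangle
        omega
      obtain ⟨i₀, hi₀, huniq⟩ := hE.2.1 s(u,w) (G.mem_edgeSet.2 hadj)
      obtain ⟨Dt, Df, hDne, hDcov⟩ := hD i₀
      -- separation facts for i₀, with representative edge (u, w)
      have hriff := fun t t' => reach_iff_side G hG hc hE hadj hi₀ Dt Df hDne hDcov t t'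
      have hSu : G.dist u u < G.dist w u := by
        rw [SimpleGraph.dist_self, SimpleGraph.dist_comm, hduw]; omega
      have hSv : ¬ (G.dist u v < G.dist w v) := by omega
      have hSw : ¬ (G.dist u w < G.dist w w) := by
        rw [SimpleGraph.dist_self, hduw]; omega
      have h1 : ¬ (G.deleteEdges (E i₀)).Reachable u v := by
        intro hr
        exact hSv ((hriff u v).1 hr |>.1 hSu)
      have h2 : (G.deleteEdges (E i₀)).Reachable w v := by
        refine (hriff w v).2 ?_
        constructor <;> intro h' <;> [exact absurd h' hSw; exact absurd h' hSv]
      -- other classes: u and w stay connected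
      have h3 : ∀ i : Fin k, i ≠ i₀ → (G.deleteEdges (E i)).Reachable u w := by
        intro i hne
        obtain ⟨⟨e, heE⟩, hsub⟩ := hE.1 i
        induction e using Sym2.ind with
        | _ x y =>
          have hxy : G.Adj x y := G.mem_edgeSet.1 (hsub heE)
          obtain ⟨Dt', Df', hDne', hDcov'⟩ := hD i
          have hnm : s(u,w) ∉ E i := fun hmem => hne (huniq i hmem)
          have := mem_class_iff_cross G hG hc hE hxy heE hadj
          refine (reach_iff_side G hG hc hE hxy heE Dt' Df' hDne' hDcov' u w).2 ?_
          tauto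
      have hset : (univ.filter fun i => ¬ (G.deleteEdges (E i)).Reachable u v)
          = insert i₀ (univ.filter fun i => ¬ (G.deleteEdges (E i)).Reachable w v) := by
        ext i
        simp only [Finset.mem_insert, Finset.mem_filter, Finset.mem_univ, true_and]
        constructor
        · intro hnr
          by_cases hi : i = i₀
          · exact Or.inl hi
          · exact Or.inr (fun hr => hnr ((h3 i hi).trans hr))
        · rintro (rfl | hnr)
          · exact h1
          · intro hr
            by_cases hi : i = i₀
            · subst hi; exact hnr h2
            · exact hnr ((h3 i hi).symm.trans hr)
      rw [hset, Finset.card_insert_of_notMem (by simp [h2]), ih w v hwv]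

lemma sum_indicator_prod [Fintype V] (a b : V → ℝ) (T F : Finset V) (R : V → V → Prop) [∀ u v : V, Decidable (R u v)]
    (h : ∀ u v, (if R u v then (1:ℝ) else 0) =
      (if u ∈ T then (1:ℝ) else 0) * (if v ∈ F then (1:ℝ) else 0) +
      (if u ∈ F then (1:ℝ) else 0) * (if v ∈ T then (1:ℝ) else 0)) :
    ∑ u : V, ∑ v : V, (a u * b v + a v * b u) * (if R u v then (1:ℝ) else 0)
      = 2 * ((∑ x ∈ T, a x) * (∑ x ∈ F, b x) + (∑ x ∈ F, a x) * (∑ x ∈ T, b x)) := by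
  have red : ∀ (f : V → ℝ) (S : Finset V),
      (∑ u : V, f u * (if u ∈ S then (1:ℝ) else 0)) = ∑ x ∈ S, f x := by
    intro f S
    rw [Finset.sum_congr rfl (fun u _ => by rw [mul_ite, mul_one, mul_zero]),
      Finset.sum_ite_mem, Finset.univ_inter]
  have key : ∀ (f g : V → ℝ), (∑ u : V, ∑ v : V, f u * g v)
      = (∑ u : V, f u) * (∑ v : V, g v) := fun f g => (Finset.sum_mul_sum _ _ _ _).symm
  calc ∑ u : V, ∑ v : V, (a u * b v + a v * b u) * (if R u v then (1:ℝ) else 0)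
      = ∑ u : V, ∑ v : V,
        ((a u * (if u ∈ T then (1:ℝ) else 0)) * (b v * (if v ∈ F then (1:ℝ) else 0))
        + (b u * (if u ∈ F then (1:ℝ) else 0)) * (a v * (if v ∈ T then (1:ℝ) else 0))
        + ((a u * (if u ∈ F then (1:ℝ) else 0)) * (b v * (if v ∈ T then (1:ℝ) else 0))
        + (b u * (if u ∈ T then (1:ℝ) else 0)) * (a v * (if v ∈ F then (1:ℝ) else 0)))) := by
        refine Finset.sum_congr rfl fun u _ => Finset.sum_congr rfl fun v _ => ?_
        rw [h]; ring
    _ = (∑ u : V, a u * (if u ∈ T then (1:ℝ) else 0)) * (∑ v : V, b v * (if v ∈ F then (1:ℝ) else 0))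
        + (∑ u : V, b u * (if u ∈ F then (1:ℝ) else 0)) * (∑ v : V, a v * (if v ∈ T then (1:ℝ) else 0))
        + ((∑ u : V, a u * (if u ∈ F then (1:ℝ) else 0)) * (∑ v : V, b v * (if v ∈ T then (1:ℝ) else 0))
        + (∑ u : V, b u * (if u ∈ T then (1:ℝ) else 0)) * (∑ v : V, a v * (if v ∈ F then (1:ℝ) else 0))) := by
        simp only [Finset.sum_add_distrib, key]
    _ = 2 * ((∑ x ∈ T, a x) * (∑ x ∈ F, b x) + (∑ x ∈ F, a x) * (∑ x ∈ T, b x)) := by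
        rw [red a T, red a F, red b T, red b F]; ring

/-- Let `G` be a connected bipartite graph which is a partial cube (so `Θ = Θ*`
is an equivalence with classes `E₁,…,E_k`, and each `G ∖ Eᵢ` has exactly two components
`C_i^1`, `C_i^2`). For double vertex-weights `a, b`,
`W(G,a,b) = ∑ᵢ (A₁(Eᵢ)B₂(Eᵢ) + A₂(Eᵢ)B₁(Eᵢ))`, where `A_j(Eᵢ) = ∑_{x∈C_i^j} a(x)` and
`B_j(Eᵢ) = ∑_{x∈C_i^j} b(x)`. -/
theorem wienerDW_partial_cube [Fintype V] (G : SimpleGraph V) (hG : G.Connected)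
    (hbip : G.Colorable 2)
    (a b : V → ℝ) (ha : ∀ v, 0 < a v) (hb : ∀ v, 0 < b v)
    (k : ℕ) (E : Fin k → Set (Sym2 V)) (hE : IsThetaPartition G E)
    (C : Fin k → Bool → Set V)
    (hcomp : ∀ i j, ∃ D : (G.deleteEdges (E i)).ConnectedComponent,
      C i j = {v : V | (G.deleteEdges (E i)).connectedComponentMk v = D})
    (hCne : ∀ i, C i true ≠ C i false)
    (hCcover : ∀ i, C i true ∪ C i false = Set.univ) :
    G.wienerDW a b = ∑ i,
      ((∑ x ∈ (C i true).toFinset, a x) * (∑ x ∈ (C i false).toFinset, b x) +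
       (∑ x ∈ (C i false).toFinset, a x) * (∑ x ∈ (C i true).toFinset, b x)) := by
  classical
  choose Dt hDt using fun i => hcomp i true
  choose Df hDf using fun i => hcomp i false
  have hDne : ∀ i, Dt i ≠ Df i := by
    intro i h
    exact hCne i (by rw [hDt, hDf, h])
  have hDcov : ∀ i v, (G.deleteEdges (E i)).connectedComponentMk v = Dt i ∨
      (G.deleteEdges (E i)).connectedComponentMk v = Df i := by
    intro i v
    have hv : v ∈ C i true ∪ C i false := by rw [hCcover i]; trivial
    rcases hv with hv | hv
    · left; rw [hDt i] at hv; exact hv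
    · right; rw [hDf i] at hv; exact hv
  have hdist := dist_eq_card_sep G hG hbip hE (fun i => ⟨Dt i, Df i, hDne i, hDcov i⟩)
  -- membership characterizations
  have hmemT : ∀ i u, u ∈ C i true ↔
      (G.deleteEdges (E i)).connectedComponentMk u = Dt i := by
    intro i u; rw [hDt i]; exact Iff.rfl
  have hmemF : ∀ i u, u ∈ C i false ↔
      (G.deleteEdges (E i)).connectedComponentMk u = Df i := by
    intro i u; rw [hDf i]; exact Iff.rfl
  -- indicator identity
  have hind : ∀ i u v, (if ¬ (G.deleteEdges (E i)).Reachable u v then (1:ℝ) else 0) =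
      (if u ∈ (C i true).toFinset then (1:ℝ) else 0) *
        (if v ∈ (C i false).toFinset then (1:ℝ) else 0) +
      (if u ∈ (C i false).toFinset then (1:ℝ) else 0) *
        (if v ∈ (C i true).toFinset then (1:ℝ) else 0) := by
    intro i u v
    have hR : (G.deleteEdges (E i)).Reachable u v ↔
        (G.deleteEdges (E i)).connectedComponentMk u =
          (G.deleteEdges (E i)).connectedComponentMk v :=
      SimpleGraph.ConnectedComponent.eq.symm
    simp only [Set.mem_toFinset, hmemT, hmemF]
    rcases hDcov i u with hu | hu <;> rcases hDcov i v with hv | hv <;>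
      simp [hu, hv, hR, hDne i, Ne.symm (hDne i)]
  have hcast : ∀ u v : V, (G.dist u v : ℝ) =
      ∑ i, (if ¬ (G.deleteEdges (E i)).Reachable u v then (1:ℝ) else 0) := by
    intro u v
    rw [Finset.sum_boole, ← hdist u v]
  have hexp : ∀ u v : V, (a u * b v + a v * b u) * (G.dist u v : ℝ) =
      ∑ i, (a u * b v + a v * b u) *
        (if ¬ (G.deleteEdges (E i)).Reachable u v then (1:ℝ) else 0) := by
    intro u v
    rw [hcast, Finset.mul_sum]
  rw [SimpleGraph.wienerDW]
  calc (1/2 : ℝ) * ∑ u : V, ∑ v : V, (a u * b v + a v * b u) * (G.dist u v : ℝ)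
      = (1/2 : ℝ) * ∑ i, ∑ u : V, ∑ v : V, (a u * b v + a v * b u) *
          (if ¬ (G.deleteEdges (E i)).Reachable u v then (1:ℝ) else 0) := by
        simp only [hexp]
        rw [Finset.sum_congr rfl (fun u _ => Finset.sum_comm), Finset.sum_comm]
    _ = ∑ i, (1/2 : ℝ) * (2 * ((∑ x ∈ (C i true).toFinset, a x) *
          (∑ x ∈ (C i false).toFinset, b x) +
          (∑ x ∈ (C i false).toFinset, a x) * (∑ x ∈ (C i true).toFinset, b x))) := by
        rw [Finset.mul_sum]
        exact Finset.sum_congr rfl fun i _ =>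
          congrArg (fun z => (1/2 : ℝ) * z)
            (sum_indicator_prod a b (C i true).toFinset (C i false).toFinset
              (fun u v => ¬ (G.deleteEdges (E i)).Reachable u v) (hind i))
    _ = ∑ i, ((∑ x ∈ (C i true).toFinset, a x) * (∑ x ∈ (C i false).toFinset, b x) +
          (∑ x ∈ (C i false).toFinset, a x) * (∑ x ∈ (C i true).toFinset, b x)) := by
        exact Finset.sum_congr rfl fun i _ => by ring

end
end

section
/- Let G be a partial cube and let u, v ∈ V(G). Then every shortest path between u and v uses at most one edge of each Θ-class, and d_G(u,v) equals the number of Θ-classes E such that u and v lie in different components of G ∖ E. -/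
open Finset
open scoped Classical

noncomputable section

variable {V : Type*}

lemma dist_getVert_le {G : SimpleGraph V} (hG : G.Connected) :
    ∀ {u v : V} (p : G.Walk u v) (i j : ℕ), i ≤ j →
    G.dist (p.getVert i) (p.getVert j) ≤ j - i := by
  intro u v p
  induction p with
  | nil => intro i j _; simp [SimpleGraph.Walk.getVert, SimpleGraph.dist_self]
  | @cons a b c h q ih =>
    intro i j hij
    rcases Nat.eq_zero_or_pos i with hi | hi
    · subst hi
      rcases Nat.eq_zero_or_pos j with hj | hj
      · simp [hj, SimpleGraph.dist_self]
      · have h2 : (SimpleGraph.Walk.cons h q).getVert j = q.getVert (j - 1) :=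
          SimpleGraph.Walk.getVert_cons q h (by omega)
        rw [show (SimpleGraph.Walk.cons h q).getVert 0 = a from rfl, h2]
        have tri := hG.dist_triangle (u := a) (v := b) (w := q.getVert (j-1))
        have hb : G.dist a b ≤ 1 := by simpa using SimpleGraph.dist_le h.toWalk
        have hqq := ih 0 (j-1) (by omega)
        rw [q.getVert_zero] at hqq
        omega
    · rw [SimpleGraph.Walk.getVert_cons q h (by omega),
        SimpleGraph.Walk.getVert_cons q h (by omega)]
      have := ih (i-1) (j-1) (by omega)
      omega

lemma dist_getVert_eq {G : SimpleGraph V} (hG : G.Connected) {u v : V} (p : G.Walk u v)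
    (hlen : p.length = G.dist u v) {i j : ℕ} (hij : i ≤ j) (hj : j ≤ p.length) :
    G.dist (p.getVert i) (p.getVert j) = j - i := by
  have h1 := dist_getVert_le hG p 0 i (by omega)
  have h2 := dist_getVert_le hG p i j hij
  have h3 := dist_getVert_le hG p j p.length hj
  rw [p.getVert_zero] at h1
  rw [p.getVert_length] at h3
  have t1 := hG.dist_triangle (u := u) (v := p.getVert i) (w := v)
  have t2 := hG.dist_triangle (u := p.getVert i) (v := p.getVert j) (w := v)
  omega

lemma edges_getElem {G : SimpleGraph V} : ∀ {u v : V} (p : G.Walk u v) (j : ℕ)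
    (hj : j < p.edges.length), p.edges[j] = s(p.getVert j, p.getVert (j+1)) := by
  intro u v p
  induction p with
  | nil => intro j hj; simp at hj
  | @cons a b c h q ih =>
    intro j hj
    rcases Nat.eq_zero_or_pos j with hj0 | hj0
    · subst hj0
      simp [SimpleGraph.Walk.edges_cons, SimpleGraph.Walk.getVert_cons_succ]
    · rw [SimpleGraph.Walk.getVert_cons q h (by omega),
        SimpleGraph.Walk.getVert_cons q h (by omega)]
      simp only [SimpleGraph.Walk.edges_cons] at hj ⊢
      rw [List.getElem_cons]
      simp only [dif_neg (by omega : ¬ j = 0)]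
      have e1 : j - 1 + 1 = j := by omega
      have e2 : j + 1 - 1 = j := by omega
      have ih' := ih (j-1) (by simp at hj ⊢; omega)
      simp only [e1] at ih'
      simp only [e2]
      exact ih'

lemma change_edge {H : SimpleGraph V} (f : V → ℤ) :
    ∀ {a b : V} (_ : H.Walk a b), f a ≠ f b → ∃ c d, H.Adj c d ∧ f c ≠ f d := by
  intro a b Q
  induction Q with
  | nil => intro hf; exact absurd rfl hf
  | @cons a b c h q ih =>
    intro hf
    by_cases hab : f a = f b
    · exact ih (by rw [← hab]; exact hf)
    · exact ⟨a, b, h, hab⟩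

/-- Two distinct edges of a geodesic cannot lie in the same Θ-class. -/
lemma no_two_aux {G : SimpleGraph V} (hG : G.Connected) {k : ℕ} {E : Fin k → Set (Sym2 V)}
    (hE : IsThetaPartition G E) {u v : V} (p : G.Walk u v) (hlen : p.length = G.dist u v)
    (i : Fin k) {j1 j2 : ℕ} (h12 : j1 < j2) (h2 : j2 < p.length)
    (m1 : s(p.getVert j1, p.getVert (j1+1)) ∈ E i)
    (m2 : s(p.getVert j2, p.getVert (j2+1)) ∈ E i) : False := by
  have a2 : G.Adj (p.getVert j2) (p.getVert (j2+1)) := p.adj_getVert_succ h2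
  have hedge2 : s(p.getVert j2, p.getVert (j2+1)) ∈ G.edgeSet := G.mem_edgeSet.mpr a2
  have htheta := (hE.2.2 i _ m1 _ hedge2).mp m2
  obtain ⟨x1, y1, x2, y2, he1, he2, _, _, hne⟩ := htheta
  have hD1 : G.dist (p.getVert j1) (p.getVert j2) = j2 - j1 :=
    dist_getVert_eq hG p hlen (by omega) (by omega)
  have hD2 : G.dist (p.getVert (j1+1)) (p.getVert (j2+1)) = j2 + 1 - (j1 + 1) :=
    dist_getVert_eq hG p hlen (by omega) (by omega)
  have hD3 : G.dist (p.getVert j1) (p.getVert (j2+1)) = j2 + 1 - j1 :=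
    dist_getVert_eq hG p hlen (by omega) (by omega)
  have hD4 : G.dist (p.getVert (j1+1)) (p.getVert j2) = j2 - (j1 + 1) :=
    dist_getVert_eq hG p hlen (by omega) (by omega)
  rcases Sym2.eq_iff.mp he1 with ⟨rfl, rfl⟩ | ⟨rfl, rfl⟩ <;>
    rcases Sym2.eq_iff.mp he2 with ⟨rfl, rfl⟩ | ⟨rfl, rfl⟩ <;> omega

/-- A Θ-class containing an edge of a geodesic separates its endpoints. -/
lemma sep_aux {G : SimpleGraph V} (hG : G.Connected) {k : ℕ} {E : Fin k → Set (Sym2 V)}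
    (hE : IsThetaPartition G E) {u v : V} (p : G.Walk u v) (hlen : p.length = G.dist u v)
    (i : Fin k) {j : ℕ} (hj : j < p.length)
    (hm : s(p.getVert j, p.getVert (j+1)) ∈ E i) :
    (G.deleteEdges (E i)).connectedComponentMk u ≠
      (G.deleteEdges (E i)).connectedComponentMk v := by
  intro hcomp
  obtain ⟨Q⟩ := SimpleGraph.ConnectedComponent.eq.mp hcomp
  set x := p.getVert j with hx
  set y := p.getVert (j+1) with hy
  have hdux : G.dist u x = j := by
    have := dist_getVert_eq hG p hlen (i := 0) (j := j) (by omega) (by omega)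
    rw [p.getVert_zero] at this; simpa using this
  have hduy : G.dist u y = j + 1 := by
    have := dist_getVert_eq hG p hlen (i := 0) (j := j+1) (by omega) (by omega)
    rw [p.getVert_zero] at this; simpa using this
  have hvx : G.dist v x = p.length - j := by
    have := dist_getVert_eq hG p hlen (i := j) (j := p.length) (by omega) (le_refl _)
    rw [p.getVert_length] at this
    rw [SimpleGraph.dist_comm]; exact this
  have hvy : G.dist v y = p.length - (j + 1) := by
    have := dist_getVert_eq hG p hlen (i := j+1) (j := p.length) (by omega) (le_refl _)
    rw [p.getVert_length] at this
    rw [SimpleGraph.dist_comm]; exact this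
  set f : V → ℤ := fun z => (G.dist z x : ℤ) - (G.dist z y : ℤ) with hf
  have hfu : f u ≠ f v := by
    simp only [hf]
    rw [hdux, hduy, hvx, hvy]
    omega
  obtain ⟨c, d, hcd, hfcd⟩ := change_edge f Q hfu
  rw [SimpleGraph.deleteEdges_adj] at hcd
  have hadjxy : G.Adj x y := p.adj_getVert_succ hj
  have htheta : G.theta s(x, y) s(c, d) := by
    refine ⟨x, y, c, d, rfl, rfl, hadjxy, hcd.1, ?_⟩
    have e1 : G.dist x c = G.dist c x := SimpleGraph.dist_comm
    have e2 : G.dist y d = G.dist d y := SimpleGraph.dist_comm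
    have e3 : G.dist x d = G.dist d x := SimpleGraph.dist_comm
    have e4 : G.dist y c = G.dist c y := SimpleGraph.dist_comm
    simp only [hf] at hfcd
    omega
  have hmem : s(c, d) ∈ E i :=
    (hE.2.2 i _ hm _ (G.mem_edgeSet.mpr hcd.1)).mpr htheta
  exact hcd.2 hmem

/-- If no edge of the walk lies in `E i`, the endpoints are in the same component. -/
lemma comp_eq_aux {G : SimpleGraph V} {k : ℕ} {E : Fin k → Set (Sym2 V)}
    {u v : V} (p : G.Walk u v) (i : Fin k)
    (h : ∀ j, j < p.length → s(p.getVert j, p.getVert (j+1)) ∉ E i) :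
    (G.deleteEdges (E i)).connectedComponentMk u =
      (G.deleteEdges (E i)).connectedComponentMk v := by
  have hp : ∀ e ∈ p.edges, e ∉ E i := by
    intro e he
    obtain ⟨j, hjlt, hje⟩ := List.mem_iff_getElem.mp he
    rw [edges_getElem p j hjlt] at hje
    rw [← hje]
    exact h j (by rw [← p.length_edges]; exact hjlt)
  exact SimpleGraph.ConnectedComponent.eq.mpr ⟨p.toDeleteEdges (E i) hp⟩

lemma countP_le_one_of_no_two {α : Type*} (P : α → Bool) :
    ∀ (l : List α), (∀ j1 j2 (h12 : j1 < j2) (h2 : j2 < l.length),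
      P (l[j1]'(by omega)) = true → P (l[j2]'h2) = true → False) → l.countP P ≤ 1 := by
  intro l
  induction l with
  | nil => intro _; simp
  | cons a t ih =>
    intro h
    rw [List.countP_cons]
    by_cases hPa : P a = true
    · have ht : t.countP P = 0 := by
        rw [List.countP_eq_zero]
        intro x hx hPx
        obtain ⟨j, hjlt, hje⟩ := List.mem_iff_getElem.mp hx
        refine h 0 (j+1) (by omega) (by simpa using hjlt) (by simpa using hPa) ?_
        simpa [hje] using hPx
      simp [ht, hPa]
    · have := ih (fun j1 j2 h12 h2 hp1 hp2 =>
        h (j1+1) (j2+1) (by omega) (by simpa using h2) (by simpa using hp1)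
          (by simpa using hp2))
      simp [hPa]
      omega

/-- In a partial cube `G` (a connected bipartite graph whose
Djoković–Winkler relation is an equivalence, with classes `E₁,…,E_k`): every shortest path
between `u` and `v` uses at most one edge of each `Θ`-class, and `d_G(u,v)` equals the number
of `Θ`-classes `E` such that `u` and `v` lie in different components of `G ∖ E`. -/
theorem shortest_path_theta_classes [Fintype V] (G : SimpleGraph V) (hG : G.Connected)
    (hbip : G.Colorable 2)
    (k : ℕ) (E : Fin k → Set (Sym2 V)) (hE : IsThetaPartition G E) :
    (∀ u v : V, ∀ p : G.Walk u v, p.IsPath → p.length = G.dist u v →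
      ∀ i, List.countP (fun e => decide (e ∈ E i)) p.edges ≤ 1) ∧
    (∀ u v : V, G.dist u v = (Finset.univ.filter (fun i : Fin k =>
      (G.deleteEdges (E i)).connectedComponentMk u ≠
        (G.deleteEdges (E i)).connectedComponentMk v)).card) := by
  constructor
  · intro u v p _ hlen i
    apply countP_le_one_of_no_two
    intro j1 j2 h12 h2 hP1 hP2
    have h2' : j2 < p.length := by rw [← p.length_edges]; exact h2
    rw [edges_getElem p j1 (by omega)] at hP1
    rw [edges_getElem p j2 h2] at hP2
    exact no_two_aux hG hE p hlen i h12 h2'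
      (of_decide_eq_true hP1) (of_decide_eq_true hP2)
  · intro u v
    obtain ⟨p, hlen⟩ := (hG.preconnected u v).exists_walk_length_eq_dist
    have hedge : ∀ j : Fin p.length, s(p.getVert j, p.getVert (j+1)) ∈ G.edgeSet :=
      fun j => G.mem_edgeSet.mpr (p.adj_getVert_succ j.2)
    set cl : Fin p.length → Fin k := fun j => (hE.2.1 _ (hedge j)).choose with hcl
    have hclmem : ∀ j, s(p.getVert j, p.getVert (j+1)) ∈ E (cl j) :=
      fun j => (hE.2.1 _ (hedge j)).choose_spec.1
    have hcluniq : ∀ (j : Fin p.length) (i : Fin k),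
        s(p.getVert j, p.getVert (j+1)) ∈ E i → i = cl j :=
      fun j i hi => (hE.2.1 _ (hedge j)).choose_spec.2 i hi
    have hcard : (Finset.univ : Finset (Fin p.length)).card =
        (Finset.univ.filter (fun i : Fin k =>
          (G.deleteEdges (E i)).connectedComponentMk u ≠
            (G.deleteEdges (E i)).connectedComponentMk v)).card := by
      refine Finset.card_bij (fun j _ => cl j) ?_ ?_ ?_
      · intro j _
        simp only [Finset.mem_filter, Finset.mem_univ, true_and]
        exact sep_aux hG hE p hlen (cl j) j.2 (hclmem j)
      · intro j1 _ j2 _ hc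
        by_contra hne
        rcases Nat.lt_or_ge (j1 : ℕ) (j2 : ℕ) with h | h
        · exact no_two_aux hG hE p hlen (cl j1) h j2.2 (hclmem j1) (hc ▸ hclmem j2)
        · have h' : (j2 : ℕ) < (j1 : ℕ) := by
            rcases Nat.lt_or_ge (j2 : ℕ) (j1 : ℕ) with h' | h'
            · exact h'
            · exact absurd (Fin.ext (by omega)) hne
          exact no_two_aux hG hE p hlen (cl j1) h' j1.2 (hc ▸ hclmem j2) (hclmem j1)
      · intro i hi
        simp only [Finset.mem_filter, Finset.mem_univ, true_and] at hi
        by_contra hsurj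
        push_neg at hsurj
        refine hi (comp_eq_aux p i ?_)
        intro j hjlt hmem
        exact hsurj ⟨j, hjlt⟩ (Finset.mem_univ _) (hcluniq ⟨j, hjlt⟩ i hmem).symm
    rw [← hlen]
    rw [← hcard]
    simp

end
end
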